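/- arXiv:math/0202034 — 13 statements merged into one kernel-verified Lean document; each statement's English description precedes it below -/
import Mathlib

section
/- Let G be a connected finite graph with edge set E and directed vertex-edge incidence matrix B (for any orientation). If x = (x_e)_{e∈E} are complex numbers with Re(x_e) > 0 for all e, then the spanning-tree generating polynomial T_G(x) = ∑_{spanning trees T} ∏_{e∈T} x_e is nonzero. -/
open Classical

set_option linter.unusedSectionVars false
set_option maxHeartbeats 3200000

namespace TreePoly

variable {V : Type} [Fintype V] [DecidableEq V]

noncomputable def pr (e : Sym2 V) : V × V := (Quot.exists_rep e).choose

noncomputable def inc (v : V) (e : Sym2 V) : ℂ :=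
  (if (pr e).1 = v then 1 else 0) - (if (pr e).2 = v then 1 else 0)

lemma pr_spec (e : Sym2 V) : s((pr e).1, (pr e).2) = e := (Quot.exists_rep e).choose_spec

lemma pr_cases {a b : V} {e : Sym2 V} (h : e = s(a, b)) :
    pr e = (a, b) ∨ pr e = (b, a) := by
  have h2 : s((pr e).1, (pr e).2) = s(a, b) := by rw [pr_spec, h]
  rw [Sym2.eq_iff] at h2
  rcases h2 with ⟨h1, h2⟩ | ⟨h1, h2⟩
  · left; exact Prod.ext h1 h2
  · right; exact Prod.ext h1 h2

lemma inc_zero {v a b : V} (ha : v ≠ a) (hb : v ≠ b) : inc v s(a, b) = 0 := by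
  rcases pr_cases (rfl : s(a,b) = s(a,b)) with h | h <;>
    simp [inc, h, ha.symm, hb.symm, Ne.symm]

lemma inc_sq {a b : V} (hab : a ≠ b) : inc a s(a, b) = 1 ∨ inc a s(a, b) = -1 := by
  rcases pr_cases (rfl : s(a,b) = s(a,b)) with h | h
  · left; simp [inc, h, hab.symm]
  · right; simp [inc, h, Ne.symm hab, hab.symm]

lemma sum_inc_univ (e : Sym2 V) (g : V → ℂ) :
    ∑ u : V, inc u e * g u = g (pr e).1 - g (pr e).2 := by
  simp only [inc, sub_mul, ite_mul, one_mul, zero_mul]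
  rw [Finset.sum_sub_distrib, Finset.sum_ite_eq, Finset.sum_ite_eq]
  simp

lemma sum_inc (v₀ : V) (e : Sym2 V) (g : V → ℂ) (h0 : g v₀ = 0) :
    ∑ b : {v : V // v ≠ v₀}, inc b.val e * g b.val = g (pr e).1 - g (pr e).2 := by
  rw [← sum_inc_univ e g]
  rw [← Finset.sum_subtype (Finset.univ.erase v₀)
    (fun x => by simp [Finset.mem_erase]) (fun u => inc u e * g u)]
  rw [← Finset.sum_erase_add Finset.univ _ (Finset.mem_univ v₀), h0, mul_zero, add_zero]

lemma star_inc (v : V) (e : Sym2 V) : star (inc v e) = inc v e := by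
  simp [inc, apply_ite star]

lemma sq_det_submatrix {m : ℕ} {α : Type} [Fintype α] [DecidableEq α]
    (M : Matrix α α ℂ) (e f : Fin m ≃ α) :
    (Matrix.det (M.submatrix e f))^2 = (Matrix.det M)^2 := by
  have h1 : M.submatrix ⇑e ⇑f = (M.submatrix e e).submatrix id ⇑(f.trans e.symm) := by
    ext i j; simp [Matrix.submatrix]
  rw [h1, Matrix.det_permute', Matrix.det_submatrix_equiv_self, mul_pow]
  have : (((Equiv.Perm.sign (f.trans e.symm) : ℤˣ) : ℤ) : ℂ)^2 = 1 := by
    rcases Int.units_eq_one_or (Equiv.Perm.sign (f.trans e.symm)) with h | h <;> simp [h]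
  rw [this, one_mul]

lemma det_sq_tree {v₀ : V} (S : Finset (Sym2 V))
    (htree : (SimpleGraph.fromEdgeSet (↑S : Set (Sym2 V))).IsTree)
    (σ₀ : {v : V // v ≠ v₀} ≃ {e // e ∈ S}) :
    (Matrix.det (Matrix.of fun a b : {v : V // v ≠ v₀} => inc b.val ((σ₀ a) : Sym2 V)))^2
      = 1 := by
  set H : SimpleGraph V := SimpleGraph.fromEdgeSet (↑S : Set (Sym2 V)) with hH
  have hconn : H.Connected := htree.isConnected
  set d : V → ℕ := fun w => H.dist w v₀ with hd
  -- parent existence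
  have hpar : ∀ w : V, w ≠ v₀ → ∃ u, s(w, u) ∈ S ∧ d w = d u + 1 := by
    intro w hw
    obtain ⟨p, hp⟩ := (hconn.preconnected w v₀).exists_walk_length_eq_dist
    cases p with
    | nil => exact absurd rfl hw
    | @cons _ u _ h q =>
      refine ⟨u, ?_, ?_⟩
      · exact Finset.mem_coe.1 (((SimpleGraph.fromEdgeSet_adj _).1 h).1)
      · have hq : d u ≤ q.length := SimpleGraph.dist_le q
        have hlen : q.length + 1 = d w := by
          simpa [Nat.add_comm] using hp
        have h2 : d w ≤ d u + 1 := by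
          obtain ⟨r, hr⟩ := (hconn.preconnected u v₀).exists_walk_length_eq_dist
          have := SimpleGraph.dist_le (SimpleGraph.Walk.cons h r)
          simpa [hr, Nat.add_comm] using this
        omega
  set par : {v : V // v ≠ v₀} → V := fun w => (hpar w.val w.prop).choose with hparf
  have hparS : ∀ w : {v : V // v ≠ v₀}, s(w.val, par w) ∈ S :=
    fun w => (hpar w.val w.prop).choose_spec.1
  have hpard : ∀ w : {v : V // v ≠ v₀}, d w.val = d (par w) + 1 :=
    fun w => (hpar w.val w.prop).choose_spec.2
  have hparne : ∀ w : {v : V // v ≠ v₀}, w.val ≠ par w := by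
    intro w heq
    have := hpard w
    rw [← heq] at this
    omega
  -- the parent-edge map is a bijection
  set pedge : {v : V // v ≠ v₀} → {e // e ∈ S} := fun w => ⟨s(w.val, par w), hparS w⟩
    with hpedge
  have hinj : Function.Injective pedge := by
    intro w w' heq
    have h2 : s(w.val, par w) = s(w'.val, par w') := congrArg Subtype.val heq
    rw [Sym2.eq_iff] at h2
    rcases h2 with ⟨h1, _⟩ | ⟨h1, h2⟩
    · exact Subtype.ext h1
    · have e1 := hpard w
      have e2 := hpard w'
      rw [h1, h2] at e1
      omega
  have hcard : Fintype.card {v : V // v ≠ v₀} = Fintype.card {e // e ∈ S} :=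
    Fintype.card_congr σ₀
  have hbij : Function.Bijective pedge :=
    (Fintype.bijective_iff_injective_and_card pedge).2 ⟨hinj, hcard⟩
  set F' : {v : V // v ≠ v₀} ≃ {e // e ∈ S} := Equiv.ofBijective pedge hbij with hF'
  -- sorting by distance, descending
  set m := Fintype.card {v : V // v ≠ v₀} with hm
  set e₀ : Fin m ≃ {v : V // v ≠ v₀} := (Fintype.equivFin {v : V // v ≠ v₀}).symm with he₀
  have hdlt : ∀ w : {v : V // v ≠ v₀}, d w.val < Fintype.card V := by
    intro w
    obtain ⟨p, hp⟩ := (hconn.preconnected w.val v₀).exists_walk_length_eq_dist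
    have h1 : d w.val ≤ p.toPath.val.length := SimpleGraph.dist_le _
    exact lt_of_le_of_lt h1 (p.toPath.prop.length_lt)
  set key : Fin m → ℕ := fun i => Fintype.card V - d (e₀ i).val with hkey
  set ψ : Fin m ≃ {v : V // v ≠ v₀} := (Tuple.sort key).trans e₀ with hψ
  have hanti : ∀ i j : Fin m, i ≤ j → d (ψ j).val ≤ d (ψ i).val := by
    intro i j hij
    have h1 : Fintype.card V - d (ψ i).val ≤ Fintype.card V - d (ψ j).val :=
      Tuple.monotone_sort key hij
    have h2 := hdlt (ψ i)
    have h3 := hdlt (ψ j)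
    omega
  set ρ : Fin m ≃ {v : V // v ≠ v₀} := ψ.trans (F'.trans σ₀.symm) with hρ
  set A : Matrix {v : V // v ≠ v₀} {v : V // v ≠ v₀} ℂ :=
    Matrix.of fun a b => inc b.val ((σ₀ a) : Sym2 V) with hA
  have hsub : ∀ i j : Fin m, (A.submatrix ρ ψ) i j = inc (ψ j).val s((ψ i).val, par (ψ i)) := by
    intro i j
    simp only [Matrix.submatrix_apply, hA, Matrix.of_apply, hρ]
    congr 1
    show ((σ₀ (σ₀.symm (F' (ψ i)))) : Sym2 V) = _
    rw [Equiv.apply_symm_apply]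
    rfl
  have htri : (A.submatrix ρ ψ).BlockTriangular id := by
    intro i j hji
    have hji' : j < i := hji
    rw [hsub]
    have hne1 : (ψ j).val ≠ (ψ i).val := by
      intro h
      exact absurd (ψ.injective (Subtype.ext h)) (ne_of_lt hji')
    have hne2 : (ψ j).val ≠ par (ψ i) := by
      intro h
      have h1 := hanti j i (le_of_lt hji')
      have h2 := hpard (ψ i)
      rw [← h] at h2
      omega
    exact inc_zero hne1 hne2
  have hdiag : ∀ i : Fin m, ((A.submatrix ρ ψ) i i)^2 = 1 := by
    intro i
    rw [hsub]
    rcases inc_sq (hparne (ψ i)) with h | h <;> rw [h] <;> ring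
  have hdet : (A.submatrix ρ ψ).det = ∏ i, (A.submatrix ρ ψ) i i :=
    Matrix.det_of_upperTriangular htri
  have : ((A.submatrix ρ ψ).det)^2 = 1 := by
    rw [hdet, ← Finset.prod_pow]
    exact Finset.prod_eq_one fun i _ => hdiag i
  rw [← sq_det_submatrix A ρ ψ]
  exact this

lemma cb_eq_sq {v₀ : V} (S : Finset (Sym2 V)) (σ₀ : {v : V // v ≠ v₀} ≃ {e // e ∈ S}) :
    ∑ σ : {v : V // v ≠ v₀} ≃ {e // e ∈ S},
      (∏ a : {v : V // v ≠ v₀}, inc a.val (σ a).val) *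
        Matrix.det (Matrix.of fun a b : {v : V // v ≠ v₀} => inc b.val ((σ a) : Sym2 V))
    = (Matrix.det (Matrix.of fun a b : {v : V // v ≠ v₀} => inc b.val ((σ₀ a) : Sym2 V)))^2 := by
  set A : Matrix {v : V // v ≠ v₀} {v : V // v ≠ v₀} ℂ :=
    Matrix.of fun a b => inc b.val ((σ₀ a) : Sym2 V) with hA
  have hbij : Function.Bijective (fun τ : Equiv.Perm {v : V // v ≠ v₀} => τ.trans σ₀) := by
    apply Function.bijective_iff_has_inverse.2
    exact ⟨fun σ => σ.trans σ₀.symm, fun τ => by ext a; simp, fun σ => by ext a; simp⟩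
  rw [← Fintype.sum_bijective _ hbij _ _ (fun τ => rfl)]
  have hterm : ∀ τ : Equiv.Perm {v : V // v ≠ v₀},
      (∏ a : {v : V // v ≠ v₀}, inc a.val ((τ.trans σ₀) a).val) *
        Matrix.det (Matrix.of fun a b : {v : V // v ≠ v₀} => inc b.val (((τ.trans σ₀) a) : Sym2 V))
      = (Equiv.Perm.sign τ • ∏ a, A (τ a) a) * A.det := by
    intro τ
    have h1 : (Matrix.of fun a b : {v : V // v ≠ v₀} => inc b.val (((τ.trans σ₀) a) : Sym2 V))
        = A.submatrix τ id := by
      ext a b; simp [hA, Matrix.submatrix]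
    rw [h1, Matrix.det_permute]
    have h2 : (∏ a : {v : V // v ≠ v₀}, inc a.val ((τ.trans σ₀) a).val)
        = ∏ a, A (τ a) a := by
      refine Finset.prod_congr rfl fun a _ => ?_
      simp [hA]
    rw [h2]
    simp [Units.smul_def, zsmul_eq_mul]
    ring
  rw [Finset.sum_congr rfl fun τ _ => hterm τ, ← Finset.sum_mul, ← Matrix.det_apply]
  rw [sq]

/-- Signed count of traversals of the edge `a` along a walk. -/
noncomputable def cs (a : Sym2 V) {H : SimpleGraph V} : ∀ {u w : V}, H.Walk u w → ℂ
  | _, _, SimpleGraph.Walk.nil => 0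
  | u, _, SimpleGraph.Walk.cons (v := u') _ p =>
      (if s(u, u') = a then (if (pr a).1 = u then 1 else -1) else 0) + cs a p

lemma cs_nil {a : Sym2 V} {H : SimpleGraph V} {u : V} : cs a (SimpleGraph.Walk.nil : H.Walk u u) = 0 := rfl

lemma cs_cons {a : Sym2 V} {H : SimpleGraph V} {u u' w : V} (h : H.Adj u u') (p : H.Walk u' w) :
    cs a (SimpleGraph.Walk.cons h p)
      = (if s(u, u') = a then (if (pr a).1 = u then 1 else -1) else 0) + cs a p := rfl

lemma cs_eq_zero_of_not_mem {a : Sym2 V} {H : SimpleGraph V} {u w : V} (p : H.Walk u w)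
    (h : a ∉ p.edges) : cs a p = 0 := by
  induction p with
  | nil => rfl
  | cons h' p ih =>
    rw [SimpleGraph.Walk.edges_cons, List.mem_cons] at h
    push_neg at h
    rw [cs_cons, if_neg (fun hh => h.1 hh.symm), ih h.2, add_zero]

lemma step_sum (S : Finset (Sym2 V)) {u u' : V} (hne : u ≠ u') (hmem : s(u, u') ∈ S) (b : V) :
    ∑ a ∈ S, (if s(u, u') = a then (if (pr a).1 = u then 1 else -1) else (0:ℂ)) * inc b a
      = (if u = b then 1 else 0) - (if u' = b then 1 else 0) := by
  rw [Finset.sum_eq_single_of_mem (s(u, u')) hmem]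
  · rw [if_pos rfl]
    rcases pr_cases (rfl : s(u,u') = s(u,u')) with hc | hc
    · rw [if_pos (by rw [hc]), one_mul]
      simp [inc, hc]
    · rw [if_neg (by rw [hc]; exact Ne.symm hne)]
      simp [inc, hc]
  · intro a _ hne'
    rw [if_neg (fun hh => hne' hh.symm), zero_mul]

lemma walk_sum (S : Finset (Sym2 V)) {u w : V}
    (p : (SimpleGraph.fromEdgeSet (↑S : Set (Sym2 V))).Walk u w) (b : V) :
    ∑ a ∈ S, cs a p * inc b a
      = (if u = b then 1 else 0) - (if w = b then 1 else 0) := by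
  induction p with
  | nil => simp [cs_nil]
  | @cons u u' w h p ih =>
    have hmem : s(u, u') ∈ S := Finset.mem_coe.1 ((SimpleGraph.fromEdgeSet_adj _).1 h).1
    have hne : u ≠ u' := ((SimpleGraph.fromEdgeSet_adj _).1 h).2
    calc ∑ a ∈ S, cs a (SimpleGraph.Walk.cons h p) * inc b a
        = (∑ a ∈ S, (if s(u, u') = a then (if (pr a).1 = u then 1 else -1) else (0:ℂ)) * inc b a)
          + ∑ a ∈ S, cs a p * inc b a := by
          rw [← Finset.sum_add_distrib]
          exact Finset.sum_congr rfl fun a _ => by rw [cs_cons]; ring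
      _ = _ := by rw [step_sum S hne hmem b, ih]; ring

lemma det_zero_cycle {v₀ : V} (S : Finset (Sym2 V)) (σ₀ : {v : V // v ≠ v₀} ≃ {e // e ∈ S})
    {vtx : V} (c : (SimpleGraph.fromEdgeSet (↑S : Set (Sym2 V))).Walk vtx vtx)
    (hc : c.IsCycle) :
    Matrix.det (Matrix.of fun a b : {v : V // v ≠ v₀} => inc b.val ((σ₀ a) : Sym2 V)) = 0 := by
  set A : Matrix {v : V // v ≠ v₀} {v : V // v ≠ v₀} ℂ :=
    Matrix.of fun a b => inc b.val ((σ₀ a) : Sym2 V) with hA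
  apply Matrix.exists_vecMul_eq_zero_iff.1
  refine ⟨fun a' => cs ((σ₀ a') : Sym2 V) c, ?_, ?_⟩
  · -- nonzero
    cases c with
    | nil => exact absurd rfl hc.ne_nil
    | @cons _ u' _ h p =>
      have hmem : s(vtx, u') ∈ S := Finset.mem_coe.1 ((SimpleGraph.fromEdgeSet_adj _).1 h).1
      intro hzero
      have h1 := congrFun hzero (σ₀.symm ⟨s(vtx, u'), hmem⟩)
      rw [Equiv.apply_symm_apply] at h1
      have hnodup := hc.edges_nodup
      rw [SimpleGraph.Walk.edges_cons, List.nodup_cons] at hnodup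
      rw [cs_cons, cs_eq_zero_of_not_mem p hnodup.1, add_zero, if_pos rfl] at h1
      rcases ite_eq_or_eq ((pr s(vtx,u')).1 = vtx) (1:ℂ) (-1) with hh | hh <;>
        rw [hh] at h1 <;> simp at h1
  · funext b
    have : (Matrix.vecMul (fun a' => cs ((σ₀ a') : Sym2 V) c) A) b
        = ∑ a' : {v : V // v ≠ v₀}, cs ((σ₀ a') : Sym2 V) c * inc b.val ((σ₀ a') : Sym2 V) := by
      simp [Matrix.vecMul, dotProduct, hA]
    rw [this]
    have h2 : ∑ a' : {v : V // v ≠ v₀}, cs ((σ₀ a') : Sym2 V) c * inc b.val ((σ₀ a') : Sym2 V)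
        = ∑ s : {e // e ∈ S}, cs (s : Sym2 V) c * inc b.val (s : Sym2 V) :=
      Equiv.sum_comp σ₀ (fun s : {e // e ∈ S} => cs (s : Sym2 V) c * inc b.val (s : Sym2 V))
    rw [h2]
    have h3 : ∑ s : {e // e ∈ S}, cs (s : Sym2 V) c * inc b.val (s : Sym2 V)
        = ∑ a ∈ S, cs a c * inc b.val a := Finset.sum_coe_sort S (fun a => cs a c * inc b.val a)
    rw [h3, walk_sum S c b.val]
    simp

lemma det_zero_disconnected {v₀ : V} (S : Finset (Sym2 V))
    (hndiag : ∀ e ∈ S, ¬ e.IsDiag)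
    (σ₀ : {v : V // v ≠ v₀} ≃ {e // e ∈ S})
    (hnc : ¬ (SimpleGraph.fromEdgeSet (↑S : Set (Sym2 V))).Connected) :
    Matrix.det (Matrix.of fun a b : {v : V // v ≠ v₀} => inc b.val ((σ₀ a) : Sym2 V)) = 0 := by
  set H : SimpleGraph V := SimpleGraph.fromEdgeSet (↑S : Set (Sym2 V)) with hH
  -- find a vertex not reachable from v₀
  have hz : ∃ z, ¬ H.Reachable z v₀ := by
    by_contra hcon
    push_neg at hcon
    apply hnc
    rw [SimpleGraph.connected_iff]
    refine ⟨fun u w => (hcon u).trans (hcon w).symm, ⟨v₀⟩⟩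
  obtain ⟨z, hz⟩ := hz
  have hzv₀ : z ≠ v₀ := fun h => hz (h ▸ SimpleGraph.Reachable.refl z)
  set W : V → ℂ := fun t => if H.Reachable z t then 1 else 0 with hW
  have hW0 : W v₀ = 0 := if_neg hz
  set A : Matrix {v : V // v ≠ v₀} {v : V // v ≠ v₀} ℂ :=
    Matrix.of fun a b => inc b.val ((σ₀ a) : Sym2 V) with hA
  apply Matrix.exists_mulVec_eq_zero_iff.1
  refine ⟨fun b => W b.val, ?_, ?_⟩
  · intro hzero
    have h1 := congrFun hzero ⟨z, hzv₀⟩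
    rw [show W z = 1 from if_pos (SimpleGraph.Reachable.refl z)] at h1
    exact one_ne_zero h1
  · funext a
    have : (A.mulVec fun b => W b.val) a
        = ∑ b : {v : V // v ≠ v₀}, inc b.val ((σ₀ a) : Sym2 V) * W b.val := by
      simp [Matrix.mulVec, dotProduct, hA]
    rw [this, sum_inc v₀ _ W hW0]
    set e : Sym2 V := ((σ₀ a) : Sym2 V) with he
    have hmem : e ∈ S := (σ₀ a).prop
    have hne : (pr e).1 ≠ (pr e).2 := by
      intro hh
      apply hndiag e hmem
      rw [← pr_spec e, Sym2.mk_isDiag_iff]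
      exact hh
    have hadj : H.Adj (pr e).1 (pr e).2 := by
      rw [hH, SimpleGraph.fromEdgeSet_adj]
      exact ⟨by rw [pr_spec e]; exact hmem, hne⟩
    have : W (pr e).1 = W (pr e).2 := by
      by_cases hr : H.Reachable z (pr e).1
      · rw [hW]
        simp only
        rw [if_pos hr, if_pos (hr.trans hadj.reachable)]
      · rw [hW]
        simp only
        rw [if_neg hr, if_neg (fun hr2 => hr (hr2.trans hadj.symm.reachable))]
    rw [this, sub_self]
    rfl

lemma detM_ne_zero (G : SimpleGraph V) [DecidableRel G.Adj] (hG : G.Connected)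
    (x : Sym2 V → ℂ) (hx : ∀ e ∈ G.edgeSet, 0 < (x e).re) (v₀ : V) :
    (Matrix.det (Matrix.of fun a b : {v : V // v ≠ v₀} =>
      ∑ e ∈ G.edgeFinset, x e * inc a.val e * inc b.val e)) ≠ 0 := by
  set M : Matrix {v : V // v ≠ v₀} {v : V // v ≠ v₀} ℂ :=
    Matrix.of fun a b => ∑ e ∈ G.edgeFinset, x e * inc a.val e * inc b.val e with hM
  intro hdet
  obtain ⟨v, hv0, hmv⟩ := (Matrix.exists_mulVec_eq_zero_iff).2 hdet
  set W : V → ℂ := fun u => if h : u = v₀ then 0 else v ⟨u, h⟩ with hW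
  have hW0 : W v₀ = 0 := by simp [hW]
  have hvW : ∀ b : {v : V // v ≠ v₀}, v b = W b.val := by
    intro b; simp [hW, b.prop]
  set S : Sym2 V → ℂ := fun e => ∑ b : {v : V // v ≠ v₀}, inc b.val e * v b with hS
  -- the quadratic form identity
  have hquad : ∑ e ∈ G.edgeFinset, x e * ((starRingEnd ℂ) (S e) * S e) = 0 := by
    have h1 : ∀ a : {v : V // v ≠ v₀},
        M.mulVec v a = ∑ e ∈ G.edgeFinset, x e * inc a.val e * S e := by
      intro a
      simp only [Matrix.mulVec, dotProduct, hM, Matrix.of_apply, Finset.sum_mul]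
      rw [Finset.sum_comm]
      refine Finset.sum_congr rfl fun e _ => ?_
      simp only [hS, Finset.mul_sum]
      refine Finset.sum_congr rfl fun b _ => by ring
    have h2 : ∑ a : {v : V // v ≠ v₀}, (starRingEnd ℂ) (v a) * (M.mulVec v a) = 0 := by
      rw [hmv]; simp
    rw [Finset.sum_congr rfl (fun a _ => by rw [h1 a])] at h2
    have h3 : ∑ a : {v : V // v ≠ v₀}, ∑ e ∈ G.edgeFinset,
        (starRingEnd ℂ) (v a) * (x e * inc a.val e * S e) = 0 := by
      simpa [Finset.mul_sum] using h2
    rw [Finset.sum_comm] at h3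
    rw [← h3]
    refine Finset.sum_congr rfl fun e _ => ?_
    have hconjS : (starRingEnd ℂ) (S e) = ∑ a : {v : V // v ≠ v₀},
        inc a.val e * (starRingEnd ℂ) (v a) := by
      simp only [hS, map_sum, map_mul]
      refine Finset.sum_congr rfl fun a _ => ?_
      rw [show (starRingEnd ℂ) (inc a.val e) = inc a.val e from star_inc _ _]
    rw [hconjS, Finset.sum_mul, Finset.mul_sum]
    refine Finset.sum_congr rfl fun a _ => by ring
  -- real part: all S e vanish
  have hSzero : ∀ e ∈ G.edgeFinset, S e = 0 := by
    have hre : ∑ e ∈ G.edgeFinset, (x e).re * Complex.normSq (S e) = 0 := by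
      have := congrArg Complex.re hquad
      rw [Complex.re_sum, Complex.zero_re] at this
      rw [← this]
      refine Finset.sum_congr rfl fun e _ => ?_
      rw [show (starRingEnd ℂ) (S e) * S e = ((Complex.normSq (S e) : ℝ) : ℂ) by
        rw [mul_comm, Complex.mul_conj]]
      simp [Complex.mul_re]
    intro e he
    have hxe : 0 < (x e).re := hx e (SimpleGraph.mem_edgeFinset.1 he)
    have hterm := (Finset.sum_eq_zero_iff_of_nonneg (fun e' he' => by
      have h := hx e' (SimpleGraph.mem_edgeFinset.1 he')
      exact mul_nonneg h.le (Complex.normSq_nonneg _))).1 hre e he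
    have : Complex.normSq (S e) = 0 := by
      rcases mul_eq_zero.1 hterm with h | h
      · exact absurd h (ne_of_gt hxe)
      · exact h
    exact Complex.normSq_eq_zero.1 this
  -- constancy along edges
  have hadj : ∀ a b : V, G.Adj a b → W a = W b := by
    intro a b hab
    have he : s(a, b) ∈ G.edgeFinset := SimpleGraph.mem_edgeFinset.2 hab
    have h0 : W (pr s(a,b)).1 - W (pr s(a,b)).2 = 0 := by
      rw [← sum_inc v₀ _ W hW0]
      rw [← hSzero _ he]
      exact Finset.sum_congr rfl fun b _ => by rw [hvW]
    rcases pr_cases (rfl : s(a,b) = s(a,b)) with h | h <;> rw [h] at h0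
    · exact sub_eq_zero.1 h0
    · exact (sub_eq_zero.1 h0).symm
  have hwalk : ∀ (u w : V) (_ : G.Walk u w), W u = W w := by
    intro u w p
    induction p with
    | nil => rfl
    | cons h p ih => exact (hadj _ _ h).trans ih
  apply hv0
  funext b
  have := hwalk b.val v₀ (hG.preconnected b.val v₀).some
  rw [hvW b, this, hW0]
  rfl

lemma detM_eq (G : SimpleGraph V) [DecidableRel G.Adj] (x : Sym2 V → ℂ) (v₀ : V) :
    (Matrix.of fun a b : {v : V // v ≠ v₀} =>
      ∑ e ∈ G.edgeFinset, x e * inc a.val e * inc b.val e).det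
    = ∑ T ∈ Finset.univ.filter
        (fun T : Finset (Sym2 V) =>
          (↑T : Set (Sym2 V)) ⊆ G.edgeSet ∧
            (SimpleGraph.fromEdgeSet (↑T : Set (Sym2 V))).IsTree),
      ∏ e ∈ T, x e := by
  set Vp := {v : V // v ≠ v₀} with hVp
  set m := Fintype.card Vp with hm
  set M : Matrix Vp Vp ℂ :=
    Matrix.of fun a b => ∑ e ∈ G.edgeFinset, x e * inc a.val e * inc b.val e with hMdef
  set term : (Vp → Sym2 V) → ℂ := fun r =>
    (∏ a : Vp, (x (r a) * inc a.val (r a))) *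
      Matrix.det (Matrix.of fun a b : Vp => inc b.val (r a)) with hterm
  -- (a) multilinear expansion
  have step1 : M.det = ∑ r ∈ Fintype.piFinset (fun _ : Vp => G.edgeFinset), term r := by
    have h2 := (Matrix.detRowAlternating :
        AlternatingMap ℂ (Vp → ℂ) ℂ Vp).toMultilinearMap.map_sum_finset
      (fun (a : Vp) (e : Sym2 V) => (x e * inc a.val e) • (fun b : Vp => inc b.val e))
      (fun _ : Vp => G.edgeFinset)
    calc M.det
        = Matrix.detRowAlternating (fun a : Vp =>
            ∑ e ∈ G.edgeFinset, (x e * inc a.val e) • (fun b : Vp => inc b.val e)) := by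
          show Matrix.detRowAlternating (M : Vp → Vp → ℂ) = _
          congr 1
          funext a
          funext b
          show M a b = (∑ e ∈ G.edgeFinset, (x e * inc a.val e) • (fun b : Vp => inc b.val e)) b
          simp only [Finset.sum_apply, Pi.smul_apply, smul_eq_mul]
          rfl
      _ = ∑ r ∈ Fintype.piFinset (fun _ : Vp => G.edgeFinset),
            Matrix.detRowAlternating (fun a : Vp =>
              (x (r a) * inc a.val (r a)) • (fun b : Vp => inc b.val (r a))) := h2
      _ = ∑ r ∈ Fintype.piFinset (fun _ : Vp => G.edgeFinset), term r := by
          refine Finset.sum_congr rfl fun r _ => ?_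
          have h3 := (Matrix.detRowAlternating :
              AlternatingMap ℂ (Vp → ℂ) ℂ Vp).toMultilinearMap.map_smul_univ
            (fun a : Vp => x (r a) * inc a.val (r a))
            (fun a : Vp => (fun b : Vp => inc b.val (r a)))
          exact h3.trans (by rw [smul_eq_mul]; rfl)
  -- (b) only injective maps contribute
  have step2 : ∑ r ∈ Fintype.piFinset (fun _ : Vp => G.edgeFinset), term r
      = ∑ r ∈ (Fintype.piFinset (fun _ : Vp => G.edgeFinset)).filter Function.Injective,
          term r := by
    symm
    apply Finset.sum_filter_of_ne
    intro r _ hne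
    by_contra hninj
    apply hne
    simp only [Function.Injective] at hninj
    push_neg at hninj
    obtain ⟨a, a', heq, hne'⟩ := hninj
    have : Matrix.det (Matrix.of fun a b : Vp => inc b.val (r a)) = 0 := by
      apply Matrix.det_zero_of_row_eq hne'
      funext b
      simp only [Matrix.of_apply, heq]
    rw [hterm]
    simp only [this, mul_zero]
  -- (c) fiber by the image
  set t : Finset (Finset (Sym2 V)) :=
    Finset.univ.filter (fun S => S ⊆ G.edgeFinset ∧ S.card = m) with ht
  have step3 : ∑ r ∈ (Fintype.piFinset (fun _ : Vp => G.edgeFinset)).filter Function.Injective,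
      term r = ∑ S ∈ t, ∑ r ∈ ((Fintype.piFinset (fun _ : Vp => G.edgeFinset)).filter
        Function.Injective).filter (fun r => Finset.image r Finset.univ = S), term r := by
    symm
    apply Finset.sum_fiberwise_of_maps_to
    intro r hr
    rw [Finset.mem_filter] at hr
    obtain ⟨hpi, hinj⟩ := hr
    rw [ht, Finset.mem_filter]
    refine ⟨Finset.mem_univ _, ?_, ?_⟩
    · intro e he
      rw [Finset.mem_image] at he
      obtain ⟨a, _, rfl⟩ := he
      exact (Fintype.mem_piFinset.1 hpi) a
    · rw [Finset.card_image_of_injective _ hinj, Finset.card_univ]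
  -- (d),(e): evaluate each fiber
  have step4 : ∀ S ∈ t,
      ∑ r ∈ ((Fintype.piFinset (fun _ : Vp => G.edgeFinset)).filter
        Function.Injective).filter (fun r => Finset.image r Finset.univ = S), term r
      = if (SimpleGraph.fromEdgeSet (↑S : Set (Sym2 V))).IsTree then ∏ e ∈ S, x e else 0 := by
    intro S hS
    rw [ht, Finset.mem_filter] at hS
    obtain ⟨-, hSsub, hScard⟩ := hS
    have hcard : Fintype.card Vp = Fintype.card {e // e ∈ S} := by
      rw [Fintype.card_coe, hScard]
    have σ₀ : Vp ≃ {e // e ∈ S} := Fintype.equivOfCardEq hcard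
    -- reindex fiber sum by equivalences
    have hfiber : ∑ r ∈ ((Fintype.piFinset (fun _ : Vp => G.edgeFinset)).filter
        Function.Injective).filter (fun r => Finset.image r Finset.univ = S), term r
        = ∑ σ : Vp ≃ {e // e ∈ S}, term (fun a => ((σ a) : Sym2 V)) := by
      symm
      apply Finset.sum_bij (fun (σ : Vp ≃ {e // e ∈ S}) _ => (fun a => ((σ a) : Sym2 V)))
      · intro σ _
        rw [Finset.mem_filter, Finset.mem_filter]
        refine ⟨⟨Fintype.mem_piFinset.2 fun a => hSsub (σ a).prop, ?_⟩, ?_⟩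
        · intro a a' haa
          exact σ.injective (Subtype.ext haa)
        · ext e
          rw [Finset.mem_image]
          constructor
          · rintro ⟨a, -, rfl⟩; exact (σ a).prop
          · intro he
            exact ⟨σ.symm ⟨e, he⟩, Finset.mem_univ _, by rw [Equiv.apply_symm_apply]⟩
      · intro σ _ σ' _ heq
        exact Equiv.ext fun a => Subtype.ext (congrFun heq a)
      · intro r hr
        rw [Finset.mem_filter, Finset.mem_filter] at hr
        obtain ⟨⟨hpi, hinj⟩, himg⟩ := hr
        have hmem : ∀ a : Vp, r a ∈ S := by
          intro a
          rw [← himg, Finset.mem_image]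
          exact ⟨a, Finset.mem_univ _, rfl⟩
        set f' : Vp → {e // e ∈ S} := fun a => ⟨r a, hmem a⟩ with hf'
        have hbij : Function.Bijective f' := by
          apply (Fintype.bijective_iff_injective_and_card f').2
          refine ⟨fun a a' h => hinj (Subtype.ext_iff.1 h), hcard⟩
        exact ⟨Equiv.ofBijective f' hbij, Finset.mem_univ _, rfl⟩
      · intro σ _
        rfl
    rw [hfiber]
    -- split the product
    have hsplit : ∀ σ : Vp ≃ {e // e ∈ S}, term (fun a => ((σ a) : Sym2 V))
        = (∏ e ∈ S, x e) * ((∏ a : Vp, inc a.val ((σ a) : Sym2 V)) *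
            Matrix.det (Matrix.of fun a b : Vp => inc b.val ((σ a) : Sym2 V))) := by
      intro σ
      rw [hterm]
      simp only
      rw [Finset.prod_mul_distrib]
      have : ∏ a : Vp, x ((σ a) : Sym2 V) = ∏ e ∈ S, x e := by
        rw [← Finset.prod_coe_sort S x]
        exact Equiv.prod_comp σ (fun s : {e // e ∈ S} => x s.val)
      rw [this, mul_assoc]
    rw [Finset.sum_congr rfl fun σ _ => hsplit σ, ← Finset.mul_sum]
    rw [cb_eq_sq S σ₀]
    by_cases htree : (SimpleGraph.fromEdgeSet (↑S : Set (Sym2 V))).IsTree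
    · rw [if_pos htree, det_sq_tree S htree σ₀, mul_one]
    · rw [if_neg htree]
      have hndiag : ∀ e ∈ S, ¬ e.IsDiag := fun e he =>
        SimpleGraph.not_isDiag_of_mem_edgeSet G (SimpleGraph.mem_edgeFinset.1 (hSsub he))
      by_cases hconn : (SimpleGraph.fromEdgeSet (↑S : Set (Sym2 V))).Connected
      · have hnacyc : ¬ (SimpleGraph.fromEdgeSet (↑S : Set (Sym2 V))).IsAcyclic :=
          fun ha => htree ⟨hconn, ha⟩
        simp only [SimpleGraph.IsAcyclic] at hnacyc
        push_neg at hnacyc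
        obtain ⟨vtx, c, hc⟩ := hnacyc
        rw [det_zero_cycle S σ₀ c hc]
        ring
      · rw [det_zero_disconnected S hndiag σ₀ hconn]
        ring
  -- final assembly
  have hm' : m = Fintype.card V - 1 := by
    have h1 : Fintype.card {v : V // ¬ v = v₀}
        = Fintype.card V - Fintype.card {v : V // v = v₀} :=
      Fintype.card_subtype_compl _
    rw [Fintype.card_subtype_eq] at h1
    have h2 : Fintype.card Vp = Fintype.card {v : V // ¬ v = v₀} :=
      Fintype.card_congr (Equiv.subtypeEquivRight fun _ => Iff.rfl)
    rw [hm]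
    omega
  have hset : t.filter (fun S : Finset (Sym2 V) =>
      (SimpleGraph.fromEdgeSet (↑S : Set (Sym2 V))).IsTree)
      = Finset.univ.filter
        (fun T : Finset (Sym2 V) =>
          (↑T : Set (Sym2 V)) ⊆ G.edgeSet ∧
            (SimpleGraph.fromEdgeSet (↑T : Set (Sym2 V))).IsTree) := by
    ext S
    simp only [Finset.mem_filter, Finset.mem_univ, true_and, ht]
    constructor
    · rintro ⟨⟨hsub, _⟩, htr⟩
      refine ⟨?_, htr⟩
      intro e he
      exact SimpleGraph.mem_edgeFinset.1 (hsub he)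
    · rintro ⟨hsub, htr⟩
      have hndiag : ∀ e ∈ S, ¬ e.IsDiag := fun e he =>
        SimpleGraph.not_isDiag_of_mem_edgeSet G (hsub he)
      refine ⟨⟨fun e he => SimpleGraph.mem_edgeFinset.2 (hsub he), ?_⟩, htr⟩
      haveI : Fintype ((SimpleGraph.fromEdgeSet (↑S : Set (Sym2 V))).edgeSet) :=
        Set.Finite.fintype (Set.toFinite _)
      have h2 := htr.card_edgeFinset
      have h3 : (SimpleGraph.fromEdgeSet (↑S : Set (Sym2 V))).edgeFinset = S := by
        apply Finset.coe_injective
        rw [SimpleGraph.coe_edgeFinset, SimpleGraph.edgeSet_fromEdgeSet]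
        exact Set.ext fun e => ⟨fun h => h.1, fun h => ⟨h, fun hd => hndiag e h hd⟩⟩
      rw [h3] at h2
      omega
  rw [step1, step2, step3, Finset.sum_congr rfl step4, ← Finset.sum_filter, hset]

end TreePoly

theorem stmt0 {V : Type} [Fintype V] [DecidableEq V] (G : SimpleGraph V)
    (hG : G.Connected) (x : Sym2 V → ℂ) (hx : ∀ e ∈ G.edgeSet, 0 < (x e).re) :
    (∑ T ∈ Finset.univ.filter
        (fun T : Finset (Sym2 V) =>
          (↑T : Set (Sym2 V)) ⊆ G.edgeSet ∧
            (SimpleGraph.fromEdgeSet (↑T : Set (Sym2 V))).IsTree),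
      ∏ e ∈ T, x e) ≠ 0 := by
  haveI : DecidableRel G.Adj := fun a b => Classical.dec _
  obtain ⟨v₀⟩ := hG.nonempty
  have h1 := TreePoly.detM_eq G x v₀
  have h2 := TreePoly.detM_ne_zero G hG x hx v₀
  rw [h1] at h2
  exact h2
end

section
/- Let P be a polynomial in n complex variables that is nonvanishing on the open right half-plane product H^n (where H = {z : Re z > 0}), and let λ_1,…,λ_n be nonnegative reals. Then the polynomial ∑_i λ_i ∂P/∂x_i is either identically zero or nonvanishing on H^n. -/
/-!
Fix `x ∈ Hⁿ` and let `p(t) = P(x + t λ)`, so that `p'(0) = (∑ λᵢ ∂P/∂xᵢ)(x)`. A root `r` of `p`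
with `Re r ≥ 0` would put `x + r λ` in `Hⁿ`; so all roots of `p` lie in the open left half-plane
and, by Gauss–Lucas, `p'(0) ≠ 0` as soon as `p` is not constant.

Non-constancy is a Hurwitz-type argument: the leading coefficient `c` in `t` of `P(X + t λ)` does
not vanish on `Hⁿ`. Otherwise pick `y` with `c(y) ≠ 0`; for `Re w > 0` the polynomials
`σ ↦ wᵈ P(x + σ (y - x) + λ / w)` have no zero in a disc `|σ| < ρ`, so their roots lie outside it
and `|f(σ)| ≤ (1 + |σ|/ρ)^deg f · |f(0)|` with a degree bound uniform in `w`. Letting `w → 0⁺`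
gives `c(x + σ (y - x)) = 0` for every `σ`, and `σ = 1` contradicts `c(y) ≠ 0`.
-/

open Polynomial

namespace MvPolynomial

variable {ι R : Type*} [CommSemiring R]

/-- `P(X + t • v)`, as a polynomial in `t` with coefficients in `MvPolynomial ι R`. -/
noncomputable def shiftAlong (v : ι → R) : MvPolynomial ι R →ₐ[R] (MvPolynomial ι R)[X] :=
  aeval fun i => Polynomial.C (X i) + Polynomial.X * Polynomial.C (C (v i))

noncomputable def restrictLine (x v : ι → R) : MvPolynomial ι R →ₐ[R] R[X] :=
  aeval fun i => Polynomial.C (x i) + Polynomial.X * Polynomial.C (v i)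

@[simp]
theorem shiftAlong_C (v : ι → R) (a : R) : shiftAlong v (C a) = Polynomial.C (C a) :=
  (shiftAlong v).commutes a

@[simp]
theorem shiftAlong_X (v : ι → R) (i : ι) :
    shiftAlong v (X i) = Polynomial.C (X i) + Polynomial.X * Polynomial.C (C (v i)) :=
  aeval_X _ i

theorem eval_restrictLine (x v : ι → R) (P : MvPolynomial ι R) (t : R) :
    (restrictLine x v P).eval t = eval (x + t • v) P := by
  have : (Polynomial.aeval t).comp (restrictLine x v) = MvPolynomial.aeval (x + t • v) := by
    rw [restrictLine, comp_aeval]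
    congr 1
    funext i
    simp only [map_add, map_mul, Polynomial.aeval_C, Polynomial.aeval_X, Pi.add_apply,
      Pi.smul_apply, smul_eq_mul, Algebra.algebraMap_self, RingHom.id_apply]
  rw [← coe_aeval_eq_eval, ← this]
  rfl

theorem evalRingHom_comp_restrictLine (x v : ι → R) (σ : R) :
    (evalRingHom σ).comp (restrictLine x v : MvPolynomial ι R →+* R[X]) = eval (x + σ • v) :=
  RingHom.ext fun P => eval_restrictLine x v P σ

theorem map_eval_shiftAlong (x v : ι → R) (P : MvPolynomial ι R) :
    (shiftAlong v P).map (eval x) = restrictLine x v P := by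
  have : (Polynomial.mapAlgHom (MvPolynomial.aeval x)).comp (shiftAlong v) =
      restrictLine x v := by
    rw [shiftAlong, restrictLine, comp_aeval]
    congr 1
    funext i
    simp
  rw [← this, ← coe_aeval_eq_eval]
  rfl

theorem shiftAlong_eval_zero (v : ι → R) (P : MvPolynomial ι R) :
    (shiftAlong v P).eval 0 = P := by
  have : (Polynomial.evalRingHom 0).comp (shiftAlong v).toRingHom = RingHom.id _ := by
    apply ringHom_ext <;> simp
  exact RingHom.congr_fun this P

theorem derivative_shiftAlong [Fintype ι] [DecidableEq ι] (v : ι → R) (P : MvPolynomial ι R) :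
    derivative (shiftAlong v P) = shiftAlong v (∑ i, v i • pderiv i P) := by
  induction P using MvPolynomial.induction_on with
  | C a => simp
  | add p q hp hq => simp only [map_add, hp, hq, smul_add, Finset.sum_add_distrib]
  | mul_X p j hp =>
    have hD : ∑ i, v i • pderiv i (p * X j) = (∑ i, v i • pderiv i p) * X j + p * C (v j) := by
      simp only [Derivation.leibniz, pderiv_X, Pi.single_apply, smul_eq_mul, mul_ite, mul_one,
        mul_zero, smul_add, smul_ite, smul_eq_C_mul, smul_zero, Finset.sum_add_distrib,
        Finset.sum_ite_eq, Finset.mem_univ, ↓reduceIte]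
      rw [Finset.sum_mul, add_comm]
      congr 1
      · exact Finset.sum_congr rfl fun i _ => by ring
      · ring
    rw [hD, map_mul, derivative_mul, hp, map_add, map_mul, map_mul, shiftAlong_X, shiftAlong_C]
    simp

end MvPolynomial

namespace Polynomial

theorem eval_derivative_ne_zero_of_re_roots_neg {p : ℂ[X]} (hp : 0 < p.degree)
    (hroots : ∀ r ∈ p.roots, r.re < 0) {z : ℂ} (hz : 0 ≤ z.re) : p.derivative.eval z ≠ 0 := by
  intro hz'
  have hmem : p.roots.toFinset.centerMass (p.derivRootWeight z) id ∈ {c : ℂ | c.re < 0} :=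
    (convex_halfSpace_re_lt 0).centerMass_mem (fun w _ => derivRootWeight_nonneg p z w)
      (sum_derivRootWeight_pos hp z) (fun r hr => hroots r (Multiset.mem_toFinset.mp hr))
  rw [← eq_centerMass_of_eval_derivative_eq_zero hp hz'] at hmem
  exact (not_lt.mpr hz) hmem

theorem norm_eval_le_of_nonvanishing_on_ball {f : ℂ[X]} {ρ : ℝ} (hρ : 0 < ρ)
    (hf : ∀ z, ‖z‖ < ρ → f.eval z ≠ 0) (z : ℂ) :
    ‖f.eval z‖ ≤ (1 + ‖z‖ / ρ) ^ f.natDegree * ‖f.eval 0‖ := by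
  have hsplit : f.Splits := IsAlgClosed.splits f
  have hnorm : ∀ y : ℂ, ‖f.eval y‖ = ‖f.leadingCoeff‖ * (f.roots.map fun r => ‖y - r‖).prod := by
    intro y
    rw [hsplit.eval_eq_prod_roots, norm_mul, ← normHom_apply (α := ℂ) (Multiset.prod _),
      map_multiset_prod, Multiset.map_map]
    rfl
  have hfactor : ∀ r ∈ f.roots, ‖z - r‖ ≤ (1 + ‖z‖ / ρ) * ‖0 - r‖ := by
    intro r hr
    have hρr : ρ ≤ ‖r‖ := not_lt.mp fun h => hf r h (isRoot_of_mem_roots hr)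
    have : ‖z‖ ≤ ‖z‖ / ρ * ‖r‖ := by
      rw [div_mul_eq_mul_div, le_div_iff₀ hρ]
      exact mul_le_mul_of_nonneg_left hρr (norm_nonneg z)
    calc ‖z - r‖ ≤ ‖z‖ + ‖r‖ := norm_sub_le z r
      _ ≤ (1 + ‖z‖ / ρ) * ‖0 - r‖ := by rw [zero_sub, norm_neg]; linarith
  calc ‖f.eval z‖
      ≤ ‖f.leadingCoeff‖ * (f.roots.map fun r => (1 + ‖z‖ / ρ) * ‖0 - r‖).prod := by
        rw [hnorm]
        gcongr
        exact Multiset.prod_map_le_prod_map₀ _ _ (fun _ _ => norm_nonneg _) hfactor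
    _ = (1 + ‖z‖ / ρ) ^ f.natDegree * ‖f.eval 0‖ := by
        rw [hnorm, Multiset.prod_map_mul, Multiset.map_const', Multiset.prod_replicate,
          IsAlgClosed.card_roots_eq_natDegree]
        ring

theorem natDegree_eval_C_le {R : Type*} [Semiring R] (g : R[X][X]) (w : R) :
    (g.eval (C w)).natDegree ≤ g.support.sup fun k => (g.coeff k).natDegree := by
  rw [eval_eq_sum, sum_def]
  refine natDegree_sum_le_of_forall_le _ _ fun k hk => ?_
  rw [← C_pow]
  exact (natDegree_mul_C_le _ _).trans (Finset.le_sup (f := fun k => (g.coeff k).natDegree) hk)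

theorem evalEval_reverse_eq_zero_iff {K : Type*} [Field K] (h : K[X][X]) (σ : K) {w : K}
    (hw : w ≠ 0) : h.reverse.evalEval σ w = 0 ↔ h.evalEval σ w⁻¹ = 0 := by
  let := invertibleOfNonzero (inv_ne_zero hw)
  have := eval₂_reflect_eq_zero_iff (RingHom.id K) w⁻¹ h.natDegree (h.map (evalRingHom σ))
    natDegree_map_le
  rw [invOf_eq_inv, inv_inv, reflect_map] at this
  rwa [← map_evalRingHom_eval, ← map_evalRingHom_eval]

theorem evalEval_zero_eq_zero_of_nonvanishing {g : ℂ[X][X]} {ρ : ℝ} (hρ : 0 < ρ)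
    (hg : ∀ σ : ℂ, ‖σ‖ < ρ → ∀ w : ℂ, 0 < w.re → g.evalEval σ w ≠ 0)
    (h0 : g.evalEval 0 0 = 0) (σ : ℂ) : g.evalEval σ 0 = 0 := by
  set K := (1 + ‖σ‖ / ρ) ^ g.support.sup fun k => (g.coeff k).natDegree
  set S := {t : ℝ | ‖g.evalEval σ (t : ℂ)‖ ≤ K * ‖g.evalEval 0 (t : ℂ)‖}
  have hbound : Set.Ioi 0 ⊆ S := by
    intro t (ht : 0 < t)
    refine (norm_eval_le_of_nonvanishing_on_ball hρ
      (fun z hz => hg z hz t (by simpa using ht)) σ).trans ?_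
    gcongr
    exact pow_le_pow_right₀ (le_add_of_nonneg_right (by positivity)) (natDegree_eval_C_le g t)
  have hcont : ∀ y : ℂ, Continuous fun t : ℝ => g.evalEval y (t : ℂ) := fun y => by
    simp_rw [← map_evalRingHom_eval]
    exact (Polynomial.continuous _).comp Complex.continuous_ofReal
  have hclosed : IsClosed S := isClosed_le (hcont σ).norm (continuous_const.mul (hcont 0).norm)
  have hzero : (0 : ℝ) ∈ S :=
    hclosed.closure_subset_iff.mpr hbound (closure_Ioi (0 : ℝ) ▸ Set.mem_Ici.mpr le_rfl)
  simpa [S, h0] using hzero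

theorem eval_zero_leadingCoeff_ne_zero_of_nonvanishing {h : ℂ[X][X]} {ρ : ℝ} (hρ : 0 < ρ)
    (hh : ∀ σ : ℂ, ‖σ‖ < ρ → ∀ t : ℂ, 0 < t.re → h.evalEval σ t ≠ 0) :
    h.leadingCoeff.eval 0 ≠ 0 := by
  -- `reverse` substitutes `t = 1 / w` and clears denominators, moving the leading coefficient
  -- to `w = 0`.
  have hrev : ∀ σ : ℂ, ‖σ‖ < ρ → ∀ w : ℂ, 0 < w.re → h.reverse.evalEval σ w ≠ 0 := by
    intro σ hσ w hw
    have hw0 : w ≠ 0 := fun hw0 => by simp [hw0] at hw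
    rw [Ne, evalEval_reverse_eq_zero_iff h σ hw0]
    exact hh σ hσ w⁻¹ (by rw [Complex.inv_re]; exact div_pos hw (Complex.normSq_pos.mpr hw0))
  have hlc : ∀ σ : ℂ, h.reverse.evalEval σ 0 = h.leadingCoeff.eval σ := fun σ => by
    rw [evalEval, C_0, ← coeff_zero_eq_eval_zero, coeff_zero_reverse]
  intro h0
  have hzero : h.leadingCoeff = 0 := Polynomial.funext fun σ => by
    rw [← hlc, evalEval_zero_eq_zero_of_nonvanishing hρ hrev (by rw [hlc, h0]) σ, eval_zero]
  rw [leadingCoeff_eq_zero] at hzero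
  exact hh 0 (by simpa using hρ) 1 (by simp) (by simp [hzero])

end Polynomial

theorem Complex.re_add_mul_ofReal_pos {z t : ℂ} {a : ℝ} (hz : 0 < z.re) (ht : 0 ≤ t.re)
    (ha : 0 ≤ a) : 0 < (z + t * a).re := by
  rw [Complex.add_re, Complex.re_mul_ofReal]
  positivity

namespace MvPolynomial

variable {ι : Type*}

theorem eval_leadingCoeff_shiftAlong_ne_zero [Finite ι] {P : MvPolynomial ι ℂ}
    (hP : ∀ x : ι → ℂ, (∀ i, 0 < (x i).re) → eval x P ≠ 0) {l : ι → ℝ} (hl : ∀ i, 0 ≤ l i)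
    {x : ι → ℂ} (hx : ∀ i, 0 < (x i).re) :
    eval x (shiftAlong (fun i => (l i : ℂ)) P).leadingCoeff ≠ 0 := by
  set F := shiftAlong (fun i => (l i : ℂ)) P with hF_def
  have hF : F ≠ 0 := fun hF => hP x hx <| by
    have h := eval_restrictLine x (fun i => (l i : ℂ)) P 0
    rwa [← map_eval_shiftAlong, ← hF_def, hF, Polynomial.map_zero, Polynomial.eval_zero,
      zero_smul, add_zero, eq_comm] at h
  obtain ⟨y, hy⟩ : ∃ y, eval y F.leadingCoeff ≠ 0 := by
    by_contra! h
    exact hF (leadingCoeff_eq_zero.mp (MvPolynomial.funext fun y => by simp [h y]))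
  have hopen : IsOpen {σ : ℂ | ∀ i, 0 < ((x + σ • (y - x)) i).re} := by
    simp only [Set.ofPred_forall]
    exact isOpen_iInter_of_finite fun i => isOpen_lt continuous_const (by fun_prop)
  obtain ⟨ρ, hρ, hball⟩ := Metric.isOpen_iff.mp hopen 0 (by simpa using hx)
  have hL : restrictLine x (y - x) F.leadingCoeff ≠ 0 := fun h0 => hy <| by
    have h := eval_restrictLine x (y - x) F.leadingCoeff 1
    rwa [h0, Polynomial.eval_zero, one_smul, add_sub_cancel, eq_comm] at h
  have key := Polynomial.eval_zero_leadingCoeff_ne_zero_of_nonvanishing hρ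
    (h := F.map (restrictLine x (y - x) : MvPolynomial ι ℂ →+* ℂ[X])) <| by
    intro σ hσ t ht
    rw [← map_evalRingHom_eval, Polynomial.map_map, evalRingHom_comp_restrictLine,
      map_eval_shiftAlong, eval_restrictLine]
    exact hP _ fun i =>
      Complex.re_add_mul_ofReal_pos (hball (mem_ball_zero_iff.mpr hσ) i) ht.le (hl i)
  rwa [leadingCoeff_map_of_leadingCoeff_ne_zero
      (restrictLine x (y - x) : MvPolynomial ι ℂ →+* ℂ[X]) hL, RingHom.coe_coe, eval_restrictLine,
    zero_smul, add_zero] at key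

theorem eval_sum_smul_pderiv_ne_zero [Fintype ι] [DecidableEq ι] {P : MvPolynomial ι ℂ}
    (hP : ∀ x : ι → ℂ, (∀ i, 0 < (x i).re) → eval x P ≠ 0) {l : ι → ℝ} (hl : ∀ i, 0 ≤ l i)
    (hQ : ∑ i, (l i : ℂ) • pderiv i P ≠ 0) {x : ι → ℂ} (hx : ∀ i, 0 < (x i).re) :
    eval x (∑ i, (l i : ℂ) • pderiv i P) ≠ 0 := by
  set v : ι → ℂ := fun i => l i
  have hroots : ∀ r ∈ (restrictLine x v P).roots, r.re < 0 := by
    intro r hr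
    by_contra! hre
    refine hP (x + r • v) (fun i => Complex.re_add_mul_ofReal_pos (hx i) hre (hl i)) ?_
    rw [← eval_restrictLine]
    exact isRoot_of_mem_roots hr
  have hdeg : 0 < (restrictLine x v P).degree := by
    rw [← natDegree_pos_iff_degree_pos, ← map_eval_shiftAlong,
      natDegree_map_of_leadingCoeff_ne_zero _ (eval_leadingCoeff_shiftAlong_ne_zero hP hl hx),
      Nat.pos_iff_ne_zero]
    intro h0
    apply hQ
    rw [← shiftAlong_eval_zero v (∑ i, (l i : ℂ) • pderiv i P), ← derivative_shiftAlong,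
      derivative_of_natDegree_zero h0, Polynomial.eval_zero]
  have := eval_derivative_ne_zero_of_re_roots_neg hdeg hroots (z := 0) le_rfl
  rwa [← map_eval_shiftAlong, derivative_map, derivative_shiftAlong, map_eval_shiftAlong,
    eval_restrictLine, zero_smul, add_zero] at this

end MvPolynomial

theorem stmt4 {n : ℕ} (P : MvPolynomial (Fin n) ℂ)
    (hP : ∀ x : Fin n → ℂ, (∀ i, 0 < (x i).re) → MvPolynomial.eval x P ≠ 0)
    (l : Fin n → ℝ) (hl : ∀ i, 0 ≤ l i) :
    (∑ i, (l i : ℂ) • MvPolynomial.pderiv i P) = 0 ∨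
      ∀ x : Fin n → ℂ, (∀ i, 0 < (x i).re) →
        MvPolynomial.eval x (∑ i, (l i : ℂ) • MvPolynomial.pderiv i P) ≠ 0 :=
  or_iff_not_imp_left.mpr fun hQ _ hx => MvPolynomial.eval_sum_smul_pderiv_ne_zero hP hl hQ hx
end

section
/- Let P be a polynomial in n complex variables that is affine in x_n, written P = P⁰ + x_n P¹ with P⁰, P¹ polynomials in x_1,…,x_{n−1}. If P is nonvanishing on H^n, P⁰ is not identically zero, and P¹ is not identically zero, then Re(P⁰(y)/P¹(y)) ≥ 0 for all y ∈ H^{n−1}. -/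
open MvPolynomial

theorem MvPolynomial.eval_snoc_rename_add_X_mul_rename {R : Type*} [CommSemiring R] {n : ℕ}
    (P0 P1 : MvPolynomial (Fin n) R) (y : Fin n → R) (t : R) :
    eval (Fin.snoc y t : Fin (n + 1) → R)
        (rename Fin.castSucc P0 + X (Fin.last n) * rename Fin.castSucc P1) =
      eval y P0 + t * eval y P1 := by
  simp only [map_add, map_mul, eval_rename, eval_X, Fin.snoc_last, Fin.snoc_comp_castSucc]

/-- If `b = 0` both sides of the conclusion are `0` (junk value of `a / 0`); otherwise
`t = -a / b` is a root of `a + t * b`, so `Re (-a / b) ≤ 0`. -/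
theorem Complex.re_div_nonneg_of_add_mul_ne_zero {a b : ℂ}
    (h : ∀ t : ℂ, 0 < t.re → a + t * b ≠ 0) : 0 ≤ (a / b).re := by
  by_cases hb : b = 0
  · simp [hb]
  by_contra! hneg
  refine h (-(a / b)) (by simpa using hneg) ?_
  field_simp
  ring

theorem stmt7_general {n : ℕ} (P0 P1 : MvPolynomial (Fin n) ℂ)
    (hP : ∀ x : Fin (n + 1) → ℂ, (∀ i, 0 < (x i).re) →
      MvPolynomial.eval x
        (MvPolynomial.rename Fin.castSucc P0 +
          MvPolynomial.X (Fin.last n) * MvPolynomial.rename Fin.castSucc P1) ≠ 0) :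
    ∀ y : Fin n → ℂ, (∀ i, 0 < (y i).re) →
      0 ≤ (MvPolynomial.eval y P0 / MvPolynomial.eval y P1).re := by
  intro y hy
  refine Complex.re_div_nonneg_of_add_mul_ne_zero fun t ht => ?_
  have hsnoc : ∀ i, 0 < ((Fin.snoc y t : Fin (n + 1) → ℂ) i).re :=
    Fin.lastCases (by simpa using ht) (fun j => by simpa using hy j)
  simpa [eval_snoc_rename_add_X_mul_rename] using hP _ hsnoc

theorem stmt7 {n : ℕ} (P0 P1 : MvPolynomial (Fin n) ℂ)
    (hP : ∀ x : Fin (n + 1) → ℂ, (∀ i, 0 < (x i).re) →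
      MvPolynomial.eval x
        (MvPolynomial.rename Fin.castSucc P0 +
          MvPolynomial.X (Fin.last n) * MvPolynomial.rename Fin.castSucc P1) ≠ 0)
    (h0 : P0 ≠ 0) (h1 : P1 ≠ 0) :
    ∀ y : Fin n → ℂ, (∀ i, 0 < (y i).re) →
      0 ≤ (MvPolynomial.eval y P0 / MvPolynomial.eval y P1).re :=
  stmt7_general P0 P1 hP
end

section
/- Let P be a nonzero homogeneous polynomial of degree r in n complex variables. Then P is nonvanishing on H^n if and only if for all vectors x, y ∈ ℝ^n with strictly positive entries, every complex root of the univariate polynomial ζ ↦ P(ζx + y) lies in the interval (−∞, 0] of the real line. -/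
open MvPolynomial in
lemma stmt8_eval_mul_pow {n r : ℕ} (P : MvPolynomial (Fin n) ℂ)
    (h : P.IsHomogeneous r) (c : ℂ) (z : Fin n → ℂ) :
    MvPolynomial.eval (fun i => c * z i) P = c ^ r * MvPolynomial.eval z P := by
  rw [eval_eq, eval_eq, Finset.mul_sum]
  apply Finset.sum_congr rfl
  intro d hd
  have hr : ∑ i ∈ d.support, d i = r := by
    have := h (mem_support_iff.mp hd)
    simpa [Finsupp.weight, Finsupp.linearCombination, Finsupp.sum] using this
  calc P.coeff d * ∏ i ∈ d.support, (c * z i) ^ d i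
      = P.coeff d * ((∏ i ∈ d.support, c ^ d i) * ∏ i ∈ d.support, z i ^ d i) := by
        rw [← Finset.prod_mul_distrib]; simp [mul_pow]
    _ = c ^ r * (P.coeff d * ∏ i ∈ d.support, z i ^ d i) := by
        rw [Finset.prod_pow_eq_pow_sum, hr]; ring

theorem stmt8 {n r : ℕ} (P : MvPolynomial (Fin n) ℂ) (hP0 : P ≠ 0)
    (hhom : P.IsHomogeneous r) :
    (∀ z : Fin n → ℂ, (∀ i, 0 < (z i).re) → MvPolynomial.eval z P ≠ 0) ↔
      ∀ x y : Fin n → ℝ, (∀ i, 0 < x i) → (∀ i, 0 < y i) →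
        ∀ ζ : ℂ, MvPolynomial.eval (fun i => ζ * (x i : ℂ) + (y i : ℂ)) P = 0 →
          ζ.im = 0 ∧ ζ.re ≤ 0 := by
  constructor
  · intro hnv x y hx hy ζ hroot
    set w : Fin n → ℂ := fun i => ζ * (x i : ℂ) + (y i : ℂ) with hw
    by_contra hcon
    push_neg at hcon
    rcases lt_trichotomy ζ.im 0 with him | him | him
    · -- rotate by I
      have h1 : ∀ i, 0 < ((Complex.I * w i)).re := by
        intro i
        have : (Complex.I * w i).re = -ζ.im * x i := by
          simp [hw, Complex.mul_re, Complex.mul_im]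
        rw [this]
        exact mul_pos (by linarith) (hx i)
      have h2 := hnv (fun i => Complex.I * w i) h1
      rw [stmt8_eval_mul_pow P hhom Complex.I w, hroot, mul_zero] at h2
      exact h2 rfl
    · -- im = 0, so re > 0
      have hre := hcon him
      have h1 : ∀ i, 0 < (w i).re := by
        intro i
        have : (w i).re = ζ.re * x i + y i := by
          simp [hw, Complex.add_re, Complex.mul_re]
        rw [this]
        have := mul_pos hre (hx i)
        linarith [hy i]
      exact hnv w h1 hroot
    · -- rotate by -I
      have h1 : ∀ i, 0 < ((-Complex.I * w i)).re := by
        intro i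
        have : (-Complex.I * w i).re = ζ.im * x i := by
          simp [hw, Complex.mul_re, Complex.mul_im]
        rw [this]
        exact mul_pos him (hx i)
      have h2 := hnv (fun i => -Complex.I * w i) h1
      rw [stmt8_eval_mul_pow P hhom (-Complex.I) w, hroot, mul_zero] at h2
      exact h2 rfl
  · intro hroots z hz hzero
    -- consider w = I * z, whose imaginary parts are positive
    set w : Fin n → ℂ := fun i => Complex.I * z i with hw
    have hwim : ∀ i, 0 < (w i).im := by
      intro i
      have : (w i).im = (z i).re := by simp [hw, Complex.mul_im]
      rw [this]; exact hz i
    obtain ⟨K, hK⟩ := Finite.exists_le (fun i => -(w i).re / (w i).im)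
    have hKpos : ∀ i, 0 < (w i).re + (K + 1) * (w i).im := by
      intro i
      have h1 : -(w i).re / (w i).im ≤ K := hK i
      have h2 : -(w i).re ≤ K * (w i).im := by
        rwa [div_le_iff₀ (hwim i)] at h1
      nlinarith [hwim i]
    set x : Fin n → ℝ := fun i => (w i).im with hx
    set y : Fin n → ℝ := fun i => (w i).re + (K + 1) * (w i).im with hy
    set ζ : ℂ := ⟨-(K + 1), 1⟩ with hζ
    have hdecomp : ∀ i, ζ * (x i : ℂ) + (y i : ℂ) = w i := by
      intro i
      apply Complex.ext <;>
        simp [hζ, hx, hy, Complex.mul_re, Complex.mul_im] <;> ring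
    have heval : MvPolynomial.eval (fun i => ζ * (x i : ℂ) + (y i : ℂ)) P = 0 := by
      have : (fun i => ζ * (x i : ℂ) + (y i : ℂ)) = w := funext hdecomp
      rw [this, hw, stmt8_eval_mul_pow P hhom Complex.I z, hzero, mul_zero]
    have := hroots x y (fun i => hwim i) hKpos ζ heval
    have : ζ.im = 0 := this.1
    simp [hζ] at this
end

section
/- Let A be an n × n real symmetric matrix with nonnegative entries, and let P_A(z) = (1/2)·zᵀAz for complex vectors z. If the second-largest eigenvalue of A satisfies λ_2(A) ≤ 0, then P_A(z) ≠ 0 for all z ∈ ℂ^n with Re(z_i) > 0 for all i, unless A = 0. -/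
/-!
Write `z = x + i y`. If `zᵀ A z = 0` then `xᵀ A x = yᵀ A y` and `xᵀ A y = 0`, while `xᵀ A x > 0`
because `x > 0` entrywise and `A ≥ 0, A ≠ 0`. So the quadratic form of `A` is positive definite on
the plane spanned by `x` and `y`. In an eigenbasis of `A` the form is `∑ λ_k a_k²` with at most one
positive `λ_{k₀}`, and the combination `y_{k₀} x - x_{k₀} y` of the plane has vanishing
`k₀`-coordinate, so the form is `≤ 0` there: contradiction.
-/

open Finset Matrix

section DiagonalForm

variable {ι : Type*} [Fintype ι] (lam : ι → ℝ)

lemma sum_mul_mul_self_nonpos_of_eq_zero {k₀ : ι} (hlam : ∀ k, k ≠ k₀ → lam k ≤ 0)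
    {v : ι → ℝ} (hv : v k₀ = 0) : ∑ k, lam k * v k * v k ≤ 0 :=
  sum_nonpos fun k _ => by
    rcases eq_or_ne k k₀ with rfl | hk
    · simp [hv]
    · nlinarith [hlam k hk, mul_self_nonneg (v k)]

lemma sum_mul_mul_self_nonpos_of_orthogonal (hlam : ∀ i j, i ≠ j → lam i ≤ 0 ∨ lam j ≤ 0)
    {a b : ι → ℝ} (hab : ∑ k, lam k * a k * b k = 0)
    (hsq : ∑ k, lam k * a k * a k = ∑ k, lam k * b k * b k) :
    ∑ k, lam k * a k * a k ≤ 0 := by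
  by_contra! hpos
  obtain ⟨k₀, hk₀⟩ : ∃ k, 0 < lam k := by
    by_contra! h
    exact hpos.not_ge (sum_nonpos fun k _ => by nlinarith [h k, mul_self_nonneg (a k)])
  have hlam₀ : ∀ k, k ≠ k₀ → lam k ≤ 0 := fun k hk => (hlam k k₀ hk).resolve_right hk₀.not_ge
  set w : ι → ℝ := fun k => b k₀ * a k - a k₀ * b k
  have hw : ∑ k, lam k * w k * w k = b k₀ ^ 2 * ∑ k, lam k * a k * a k
      - 2 * (a k₀ * b k₀) * ∑ k, lam k * a k * b k + a k₀ ^ 2 * ∑ k, lam k * b k * b k := by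
    simp only [w, mul_sum, ← sum_sub_distrib, ← sum_add_distrib]
    exact sum_congr rfl fun k _ => by ring
  rw [hab, ← hsq] at hw
  have hwle := sum_mul_mul_self_nonpos_of_eq_zero lam hlam₀ (v := w) (by simp only [w]; ring)
  have hsq₀ : a k₀ ^ 2 + b k₀ ^ 2 ≤ 0 := by
    refine nonpos_of_mul_nonpos_left (b := ∑ k, lam k * a k * a k) ?_ hpos
    linarith
  have ha₀ : a k₀ = 0 := by nlinarith [sq_nonneg (a k₀), sq_nonneg (b k₀)]
  exact hpos.not_ge (sum_mul_mul_self_nonpos_of_eq_zero lam hlam₀ ha₀)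

end DiagonalForm

lemma Matrix.IsHermitian.dotProduct_mulVec_eq_sum_eigenvalues {n : Type*} [Fintype n]
    [DecidableEq n] {A : Matrix n n ℝ} (hA : A.IsHermitian) (v w : n → ℝ) :
    v ⬝ᵥ A *ᵥ w = ∑ k, hA.eigenvalues k * ((hA.eigenvectorUnitary : Matrix n n ℝ)ᵀ *ᵥ v) k *
      ((hA.eigenvectorUnitary : Matrix n n ℝ)ᵀ *ᵥ w) k := by
  conv_lhs => rw [hA.spectral_theorem, Unitary.conjStarAlgAut_apply]
  rw [← mulVec_mulVec, ← mulVec_mulVec, dotProduct_mulVec, ← mulVec_transpose,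
    star_eq_conjTranspose, conjTranspose_eq_transpose_of_trivial]
  simp only [dotProduct, mulVec_diagonal, Function.comp_apply, RCLike.ofReal_real_eq_id, id]
  exact sum_congr rfl fun k _ => by ring

lemma dotProduct_mulVec_self_pos {ι : Type*} [Fintype ι] {A : Matrix ι ι ℝ}
    (hnn : ∀ i j, 0 ≤ A i j) (hA : A ≠ 0) {x : ι → ℝ} (hx : ∀ i, 0 < x i) :
    0 < x ⬝ᵥ A *ᵥ x := by
  obtain ⟨i, j, hij⟩ : ∃ i j, A i j ≠ 0 := by
    by_contra! h
    exact hA (Matrix.ext h)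
  have hAx : ∀ p, 0 ≤ (A *ᵥ x) p := fun p => sum_nonneg fun q _ => mul_nonneg (hnn p q) (hx q).le
  have hAxi : 0 < (A *ᵥ x) i :=
    calc 0 < A i j * x j := mul_pos ((hnn i j).lt_of_ne' hij) (hx j)
    _ ≤ (A *ᵥ x) i := single_le_sum (f := fun q => A i q * x q)
        (fun q _ => mul_nonneg (hnn i q) (hx q).le) (mem_univ j)
  calc 0 < x i * (A *ᵥ x) i := mul_pos (hx i) hAxi
  _ ≤ x ⬝ᵥ A *ᵥ x := single_le_sum (f := fun p => x p * (A *ᵥ x) p)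
      (fun p _ => mul_nonneg (hx p).le (hAx p)) (mem_univ i)

section ComplexForm

variable {ι : Type*} [Fintype ι] (A : Matrix ι ι ℝ) (z : ι → ℂ)

lemma re_sum_sum_mul_mul :
    (∑ i, ∑ j, (A i j : ℂ) * z i * z j).re =
      (fun i => (z i).re) ⬝ᵥ A *ᵥ (fun i => (z i).re) -
        (fun i => (z i).im) ⬝ᵥ A *ᵥ (fun i => (z i).im) := by
  simp only [Complex.re_sum, Complex.mul_re, Complex.mul_im, Complex.ofReal_re,
    Complex.ofReal_im, dotProduct, Matrix.mulVec, mul_sum, ← sum_sub_distrib]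
  exact sum_congr rfl fun i _ => sum_congr rfl fun j _ => by ring

lemma im_sum_sum_mul_mul :
    (∑ i, ∑ j, (A i j : ℂ) * z i * z j).im =
      (fun i => (z i).re) ⬝ᵥ A *ᵥ (fun i => (z i).im) +
        (fun i => (z i).im) ⬝ᵥ A *ᵥ (fun i => (z i).re) := by
  simp only [Complex.im_sum, Complex.mul_re, Complex.mul_im, Complex.ofReal_re,
    Complex.ofReal_im, dotProduct, Matrix.mulVec, mul_sum, ← sum_add_distrib]
  exact sum_congr rfl fun i _ => sum_congr rfl fun j _ => by ring

end ComplexForm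

theorem stmt9 {n : ℕ} (A : Matrix (Fin n) (Fin n) ℝ) (hsymm : A.IsHermitian)
    (hnn : ∀ i j, 0 ≤ A i j)
    (hl2 : ∀ i j : Fin n, i ≠ j →
      hsymm.eigenvalues i ≤ 0 ∨ hsymm.eigenvalues j ≤ 0)
    (hA : A ≠ 0) (z : Fin n → ℂ) (hz : ∀ i, 0 < (z i).re) :
    (1 / 2 : ℂ) * ∑ i, ∑ j, (A i j : ℂ) * z i * z j ≠ 0 := by
  intro h0
  have hS : ∑ i, ∑ j, (A i j : ℂ) * z i * z j = 0 := (mul_eq_zero.1 h0).resolve_left (by norm_num)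
  have hre := re_sum_sum_mul_mul A z
  have him := im_sum_sum_mul_mul A z
  rw [hS, Complex.zero_re] at hre
  rw [hS, Complex.zero_im] at him
  simp only [hsymm.dotProduct_mulVec_eq_sum_eigenvalues] at hre him
  refine (dotProduct_mulVec_self_pos hnn hA hz).not_ge ?_
  rw [hsymm.dotProduct_mulVec_eq_sum_eigenvalues]
  set a := (hsymm.eigenvectorUnitary : Matrix (Fin n) (Fin n) ℝ)ᵀ *ᵥ fun i => (z i).re
  set b := (hsymm.eigenvectorUnitary : Matrix (Fin n) (Fin n) ℝ)ᵀ *ᵥ fun i => (z i).im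
  have hba : ∑ k, hsymm.eigenvalues k * b k * a k = ∑ k, hsymm.eigenvalues k * a k * b k :=
    sum_congr rfl fun k _ => mul_right_comm _ _ _
  exact sum_mul_mul_self_nonpos_of_orthogonal _ hl2 (by linarith) (by linarith)
end

section
/- Let A be an n × n real symmetric matrix with nonnegative entries such that P_A(z) = (1/2)zᵀAz is nonvanishing on H^n. Then (xᵀAy)² ≥ (xᵀAx)(yᵀAy) for all x, y ∈ ℝ^n with nonnegative entries. -/
/-!
If `(xᵀAy)² < (xᵀAx)(yᵀAy)` for some `y > 0`, the quadratic
`v ↦ 2 P_A(i x + v y) = (yᵀAy) v² + 2i (xᵀAy) v - xᵀAx` has the roots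
`(±√((xᵀAx)(yᵀAy) - (xᵀAy)²) - i xᵀAy) / yᵀAy`, one of which has `Re v > 0`;
then `z = i x + v y` lies in `Hⁿ` and `P_A(z) = 0`. The case `y ≥ 0` follows by
perturbing `y` to `y + ε 𝟙`.
-/

open Matrix Complex Filter Topology

namespace Matrix

variable {ι R : Type*} [Fintype ι]

lemma sum_sum_mul_mul_eq_dotProduct_mulVec [CommSemiring R] (A : Matrix ι ι R) (x y : ι → R) :
    ∑ i, ∑ j, x i * A i j * y j = x ⬝ᵥ A *ᵥ y := by
  simp only [dotProduct, mulVec, Finset.mul_sum, mul_assoc]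

lemma IsSymm.dotProduct_mulVec_comm [CommSemiring R] {A : Matrix ι ι R} (hA : A.IsSymm)
    (x y : ι → R) : y ⬝ᵥ A *ᵥ x = x ⬝ᵥ A *ᵥ y := by
  rw [dotProduct_comm, ← vecMul_transpose, hA.eq, ← dotProduct_mulVec]

lemma IsSymm.dotProduct_mulVec_smul_add_smul [CommRing R] {A : Matrix ι ι R} (hA : A.IsSymm)
    (a b : R) (x y : ι → R) :
    (a • x + b • y) ⬝ᵥ A *ᵥ (a • x + b • y) =
      a ^ 2 * (x ⬝ᵥ A *ᵥ x) + 2 * a * b * (x ⬝ᵥ A *ᵥ y) + b ^ 2 * (y ⬝ᵥ A *ᵥ y) := by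
  simp only [mulVec_add, mulVec_smul, add_dotProduct, dotProduct_add, smul_dotProduct,
    dotProduct_smul, smul_eq_mul, hA.dotProduct_mulVec_comm x y]
  ring

end Matrix

lemma Complex.exists_re_pos_mul_sq_add_mul_I_sub_eq_zero {b c d : ℝ} (h : b ^ 2 < c * d) :
    ∃ v : ℂ, 0 < v.re ∧ d * v ^ 2 + 2 * b * I * v - c = 0 := by
  have hd : d ≠ 0 := by rintro rfl; nlinarith
  -- the root `(σ - b i) / d`, with `σ = ±√(cd - b²)` taking the sign of `d`
  obtain ⟨σ, hσ, hσd⟩ : ∃ σ : ℝ, σ ^ 2 = c * d - b ^ 2 ∧ 0 < σ / d := by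
    have hs := Real.sq_sqrt (sub_nonneg.2 h.le)
    have hs0 := Real.sqrt_pos.2 (sub_pos.2 h)
    rcases hd.lt_or_gt with hd | hd
    · exact ⟨-√(c * d - b ^ 2), by rw [neg_sq, hs], div_pos_of_neg_of_neg (by linarith) hd⟩
    · exact ⟨√(c * d - b ^ 2), hs, div_pos hs0 hd⟩
  refine ⟨(σ - b * I) / d, by simpa [div_ofReal_re] using hσd, ?_⟩
  have hσ' : (σ : ℂ) ^ 2 = c * d - b ^ 2 := by exact_mod_cast hσ
  have hd' : (d : ℂ) ≠ 0 := ofReal_ne_zero.2 hd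
  field_simp
  linear_combination hσ' - b ^ 2 * I_sq

section HalfPlane

variable {ι : Type*} [Fintype ι] {A : Matrix ι ι ℝ}

lemma sq_dotProduct_mulVec_ge_of_pos (hA : A.IsSymm)
    (hP : ∀ z : ι → ℂ, (∀ i, 0 < (z i).re) → z ⬝ᵥ A.map ofReal *ᵥ z ≠ 0)
    (x : ι → ℝ) {y : ι → ℝ} (hy : ∀ i, 0 < y i) :
    (x ⬝ᵥ A *ᵥ x) * (y ⬝ᵥ A *ᵥ y) ≤ (x ⬝ᵥ A *ᵥ y) ^ 2 := by
  by_contra! h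
  obtain ⟨v, hv, hroot⟩ := exists_re_pos_mul_sq_add_mul_I_sub_eq_zero h
  have hcast (u w : ι → ℝ) :
      (fun i => (u i : ℂ)) ⬝ᵥ A.map ofReal *ᵥ (fun i => (w i : ℂ)) = (u ⬝ᵥ A *ᵥ w : ℝ) := by
    simp [dotProduct, mulVec]
  refine hP (I • (fun i => (x i : ℂ)) + v • (fun i => (y i : ℂ))) (fun i => ?_) ?_
  · simpa using mul_pos hv (hy i)
  · rw [(hA.map _).dotProduct_mulVec_smul_add_smul]
    simp only [hcast, I_sq]
    linear_combination hroot

lemma sq_dotProduct_mulVec_ge (hA : A.IsSymm)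
    (hP : ∀ z : ι → ℂ, (∀ i, 0 < (z i).re) → z ⬝ᵥ A.map ofReal *ᵥ z ≠ 0)
    (x : ι → ℝ) {y : ι → ℝ} (hy : ∀ i, 0 ≤ y i) :
    (x ⬝ᵥ A *ᵥ x) * (y ⬝ᵥ A *ᵥ y) ≤ (x ⬝ᵥ A *ᵥ y) ^ 2 := by
  let f : ℝ → ℝ := fun ε => (x ⬝ᵥ A *ᵥ (y + ε • 1)) ^ 2 -
    (x ⬝ᵥ A *ᵥ x) * ((y + ε • 1) ⬝ᵥ A *ᵥ (y + ε • 1))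
  have hf : Tendsto f (𝓝[>] 0) (𝓝 (f 0)) :=
    ((by fun_prop : Continuous f).tendsto 0).mono_left nhdsWithin_le_nhds
  have hpos : ∀ᶠ ε in 𝓝[>] 0, 0 ≤ f ε := by
    filter_upwards [self_mem_nhdsWithin] with ε (hε : 0 < ε)
    exact sub_nonneg.2 <| sq_dotProduct_mulVec_ge_of_pos hA hP x fun i => by
      simpa using add_pos_of_nonneg_of_pos (hy i) hε
  simpa [f] using ge_of_tendsto hf hpos

end HalfPlane

theorem stmt10_general {n : ℕ} (A : Matrix (Fin n) (Fin n) ℝ) (hsymm : A.IsSymm)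
    (hP : ∀ z : Fin n → ℂ, (∀ i, 0 < (z i).re) →
      (1 / 2 : ℂ) * ∑ i, ∑ j, (A i j : ℂ) * z i * z j ≠ 0) :
    ∀ x y : Fin n → ℝ, (∀ i, 0 ≤ x i) → (∀ i, 0 ≤ y i) →
      (∑ i, ∑ j, x i * A i j * y j) ^ 2 ≥
        (∑ i, ∑ j, x i * A i j * x j) * (∑ i, ∑ j, y i * A i j * y j) := by
  intro x y _ hy
  have hP' : ∀ z : Fin n → ℂ, (∀ i, 0 < (z i).re) → z ⬝ᵥ A.map ofReal *ᵥ z ≠ 0 := by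
    intro z hz hzero
    refine hP z hz ?_
    rw [← sum_sum_mul_mul_eq_dotProduct_mulVec] at hzero
    simp only [map_apply, mul_comm (z _)] at hzero
    rw [hzero, mul_zero]
  simp only [sum_sum_mul_mul_eq_dotProduct_mulVec]
  exact sq_dotProduct_mulVec_ge hsymm hP' x hy

theorem stmt10 {n : ℕ} (A : Matrix (Fin n) (Fin n) ℝ) (hsymm : A.IsSymm)
    (hnn : ∀ i j, 0 ≤ A i j)
    (hP : ∀ z : Fin n → ℂ, (∀ i, 0 < (z i).re) →
      (1 / 2 : ℂ) * ∑ i, ∑ j, (A i j : ℂ) * z i * z j ≠ 0) :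
    ∀ x y : Fin n → ℝ, (∀ i, 0 ≤ x i) → (∀ i, 0 ≤ y i) →
      (∑ i, ∑ j, x i * A i j * y j) ^ 2 ≥
        (∑ i, ∑ j, x i * A i j * x j) * (∑ i, ∑ j, y i * A i j * y j) :=
  stmt10_general A hsymm hP
end

section
/- Let P(x) = ∑_{m} a_m x^m be a homogeneous polynomial of degree r in n complex variables that is nonvanishing on H^n and not identically zero. Then there exists θ ∈ ℝ such that e^{−iθ}·a_m is a positive real number for every multi-index m with a_m ≠ 0. -/
/-!
Restricted to a line `t ↦ β + t • α` with `α, β` positive real vectors, `P` has only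
nonpositive real roots: a root `w ^ 2` off `(-∞, 0]`, with `0 < re w`, would make
`β + w ^ 2 • α = w • (w⁻¹ • β + w • α)` a zero of `P` in the product of half-planes.
Hence `P` has constant phase on the positive orthant.

For positive `γ`, the directional derivative `∑ⱼ γⱼ ∂ⱼ P` is homogeneous of one degree
less, again has the half-plane property (by Gauss–Lucas its critical points lie in the convex
hull of the roots, all in the open left half-plane), and by Euler's identity has the phase of
`P` on the orthant. By induction on the degree its coefficients are nonnegative multiples of
`P β`; these coefficients are linear in `γ`, so letting `γ` tend to a coordinate vector gives
the same for every coefficient of `P`.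
-/

-- For `z : ℂ`, `0 < z` and `0 ≤ z` now say that `z` is a positive, resp. nonnegative, real.
open scoped ComplexOrder

namespace Polynomial

variable {R : Type*} [CommSemiring R]

theorem coeff_prod_sum_of_natDegree_le {ι : Type*} (s : Finset ι) (f : ι → R[X])
    (n : ι → ℕ) (h : ∀ i ∈ s, (f i).natDegree ≤ n i) :
    (∏ i ∈ s, f i).coeff (∑ i ∈ s, n i) = ∏ i ∈ s, (f i).coeff (n i) := by
  induction s using Finset.cons_induction with
  | empty => simp
  | cons a s ha ih =>
    rw [Finset.prod_cons, Finset.sum_cons, Finset.prod_cons,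
      coeff_mul_add_eq_of_natDegree_le (h a (Finset.mem_cons_self a s)),
      ih fun i hi => h i (by simp [hi])]
    exact (natDegree_prod_le _ _).trans
      (Finset.sum_le_sum fun i hi => h i (Finset.mem_cons_of_mem hi))

theorem eval_div_eval_pos_of_roots_nonpos {q : ℂ[X]} (hq : ∀ ρ ∈ q.roots, ρ ≤ 0)
    {s t : ℂ} (hs : 0 ≤ s) (ht : 0 ≤ t) (hqs : q.eval s ≠ 0) (hqt : q.eval t ≠ 0) :
    0 < q.eval s / q.eval t := by
  have hlc : q.leadingCoeff ≠ 0 := leadingCoeff_ne_zero.2 fun h => hqs (by simp [h])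
  have eval_div_lc_pos : ∀ u : ℂ, 0 ≤ u → q.eval u ≠ 0 → 0 < q.eval u / q.leadingCoeff := by
    intro u hu hqu
    have heval : q.eval u = q.leadingCoeff * (q.roots.map (u - ·)).prod := by
      conv_lhs => rw [(IsAlgClosed.splits q).eq_prod_roots]
      simp [eval_multiset_prod]
    rw [heval, mul_div_cancel_left₀ _ hlc]
    refine lt_of_le_of_ne (Multiset.prod_nonneg fun z hz => ?_)
      fun h => hqu (by rw [heval, ← h, mul_zero])
    obtain ⟨ρ, hρ, rfl⟩ := Multiset.mem_map.1 hz
    exact sub_nonneg.2 ((hq ρ hρ).trans hu)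
  rw [← div_div_div_cancel_right₀ hlc]
  exact div_pos (eval_div_lc_pos s hs hqs) (eval_div_lc_pos t ht hqt)

end Polynomial

namespace MvPolynomial

variable {σ R : Type*} [CommSemiring R]

theorem IsHomogeneous.eval_smul {P : MvPolynomial σ R} {d : ℕ} (hP : P.IsHomogeneous d)
    (c : R) (x : σ → R) : eval (c • x) P = c ^ d * eval x P := by
  simp only [eval_eq, Finset.mul_sum]
  refine Finset.sum_congr rfl fun m hm => ?_
  simp only [hP.degree_eq_sum_deg_support hm, Pi.smul_apply, smul_eq_mul, mul_pow,
    Finset.prod_mul_distrib, Finset.prod_pow_eq_pow_sum]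
  ring

noncomputable def restrictToLine (P : MvPolynomial σ R) (x y : σ → R) : Polynomial R :=
  aeval (fun i => Polynomial.C (y i) * Polynomial.X + Polynomial.C (x i)) P

theorem eval_restrictToLine (P : MvPolynomial σ R) (x y : σ → R) (t : R) :
    (P.restrictToLine x y).eval t = eval (x + t • y) P := by
  rw [restrictToLine, ← Polynomial.coe_aeval_eq_eval, comp_aeval_apply, ← aeval_eq_eval]
  congr 1
  ext i
  simp only [aeval_X, Polynomial.coe_aeval_eq_eval, Polynomial.eval_add, Polynomial.eval_mul,
    Polynomial.eval_C, Polynomial.eval_X, Pi.add_apply, Pi.smul_apply, smul_eq_mul]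
  ring

theorem IsHomogeneous.coeff_restrictToLine {P : MvPolynomial σ R} {d : ℕ}
    (hP : P.IsHomogeneous d) (x y : σ → R) : (P.restrictToLine x y).coeff d = eval y P := by
  rw [restrictToLine, aeval_def, eval₂_eq, Polynomial.finsetSum_coeff, eval_eq]
  refine Finset.sum_congr rfl fun m hm => ?_
  rw [Polynomial.algebraMap_eq, Polynomial.coeff_C_mul, hP.degree_eq_sum_deg_support hm,
    Polynomial.coeff_prod_sum_of_natDegree_le _ _ _ fun i _ => ?_]
  · congr 1
    refine Finset.prod_congr rfl fun i _ => ?_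
    have := Polynomial.coeff_pow_of_natDegree_le (m := m i)
      (Polynomial.natDegree_linear_le (a := y i) (b := x i))
    rw [mul_one] at this
    simp [this]
  · exact Polynomial.natDegree_pow_le.trans (by
      simpa using Nat.mul_le_mul_left (m i) (Polynomial.natDegree_linear_le (a := y i) (b := x i)))

theorem derivative_aeval [Fintype σ] (u : σ → Polynomial R) (P : MvPolynomial σ R) :
    Polynomial.derivative (aeval u P) =
      ∑ j, aeval u (pderiv j P) * Polynomial.derivative (u j) := by
  induction P using MvPolynomial.induction_on with
  | C a => simp
  | add p q hp hq => simp only [map_add, hp, hq, add_mul, Finset.sum_add_distrib]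
  | mul_X p i hp =>
    classical
    have hX : ∑ j, aeval u (pderiv j (X i : MvPolynomial σ R)) * Polynomial.derivative (u j) =
        Polynomial.derivative (u i) := by
      simp [pderiv_X, Pi.single_apply]
    simp only [map_mul, aeval_X, Polynomial.derivative_mul, hp, pderiv_mul, map_add, add_mul,
      Finset.sum_add_distrib, Finset.sum_mul, mul_assoc, ← Finset.mul_sum, hX]
    simp only [mul_comm _ (u i), mul_left_comm _ (u i), add_comm]

variable [Fintype σ]

noncomputable def directionalDeriv (y : σ → R) (P : MvPolynomial σ R) : MvPolynomial σ R :=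
  ∑ j, C (y j) * pderiv j P

theorem derivative_restrictToLine (P : MvPolynomial σ R) (x y : σ → R) :
    Polynomial.derivative (P.restrictToLine x y) = (directionalDeriv y P).restrictToLine x y := by
  simp only [restrictToLine, directionalDeriv, derivative_aeval, map_sum, map_mul, aeval_C,
    Polynomial.algebraMap_eq]
  refine Finset.sum_congr rfl fun j _ => ?_
  rw [Polynomial.derivative_add, Polynomial.derivative_C_mul_X, Polynomial.derivative_C, add_zero,
    mul_comm]

theorem coeff_directionalDeriv (y : σ → R) (P : MvPolynomial σ R) (κ : σ →₀ ℕ) :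
    (directionalDeriv y P).coeff κ =
      ∑ j, y j * (P.coeff (κ + Finsupp.single j 1) * (κ j + 1)) := by
  simp [directionalDeriv, coeff_sum, coeff_C_mul, coeff_pderiv]

theorem IsHomogeneous.directionalDeriv {P : MvPolynomial σ R} {d : ℕ}
    (hP : P.IsHomogeneous d) (y : σ → R) :
    (MvPolynomial.directionalDeriv y P).IsHomogeneous (d - 1) :=
  IsHomogeneous.sum _ _ _ fun _ _ => (hP.pderiv).C_mul _

theorem IsHomogeneous.eval_directionalDeriv_self {P : MvPolynomial σ R} {d : ℕ}
    (hP : P.IsHomogeneous d) (y : σ → R) :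
    eval y (MvPolynomial.directionalDeriv y P) = d * eval y P := by
  have := congrArg (eval y) hP.sum_X_mul_pderiv
  simpa [MvPolynomial.directionalDeriv] using this

end MvPolynomial

namespace Complex

theorem exists_sq_eq_re_pos_of_mem_slitPlane {z : ℂ} (hz : z ∈ slitPlane) :
    ∃ w : ℂ, w ^ 2 = z ∧ 0 < w.re := by
  obtain ⟨harg, hz0⟩ := mem_slitPlane_iff_arg.1 hz
  refine ⟨exp (log z / 2), by rw [sq, ← exp_add, add_halves, exp_log hz0], ?_⟩
  rw [exp_re]
  refine mul_pos (Real.exp_pos _) (Real.cos_pos_of_mem_Ioo ⟨?_, ?_⟩) <;>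
    simp only [div_ofNat_im, log_im] <;>
    linarith [neg_pi_lt_arg z, lt_of_le_of_ne (arg_le_pi z) harg]

theorem nonneg_of_forall_pos_sum_mul_nonneg {ι : Type*} [Fintype ι] (c : ι → ℂ)
    (h : ∀ γ : ι → ℂ, (∀ i, 0 < γ i) → 0 ≤ ∑ i, γ i * c i) (j : ι) : 0 ≤ c j := by
  classical
  let f : ℝ → ℂ := fun ε => ∑ i, (ε + if i = j then 1 else 0) * c i
  have hf : Filter.Tendsto f (nhdsWithin 0 (Set.Ioi 0)) (nhds (c j)) := by
    have : f 0 = c j := by simp [f]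
    rw [← this]
    exact (Continuous.tendsto (by fun_prop) 0).mono_left nhdsWithin_le_nhds
  refine ge_of_tendsto hf (eventually_nhdsWithin_of_forall fun ε (hε : 0 < ε) => h _ fun i => ?_)
  have : (0 : ℂ) < ε := zero_lt_real.2 hε
  split_ifs <;> simp [this, add_pos_of_pos_of_nonneg]

end Complex


open MvPolynomial

def HasHalfPlaneProperty {σ : Type*} (P : MvPolynomial σ ℂ) : Prop :=
  ∀ x : σ → ℂ, (∀ i, 0 < (x i).re) → eval x P ≠ 0

namespace HasHalfPlaneProperty

variable {σ : Type*} {P : MvPolynomial σ ℂ} {d : ℕ}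

theorem eval_ne_zero_of_pos (hP : HasHalfPlaneProperty P) {x : σ → ℂ}
    (hx : ∀ i, 0 < x i) : eval x P ≠ 0 :=
  hP x fun i => (Complex.pos_iff.1 (hx i)).1

theorem nonpos_of_mem_roots_restrictToLine (hP : HasHalfPlaneProperty P)
    (hhom : P.IsHomogeneous d) {x y : σ → ℂ} (hx : ∀ i, 0 < x i) (hy : ∀ i, 0 < y i)
    {ρ : ℂ} (hρ : ρ ∈ (P.restrictToLine x y).roots) : ρ ≤ 0 := by
  by_contra hρ0
  obtain ⟨w, rfl, hw⟩ := Complex.exists_sq_eq_re_pos_of_mem_slitPlane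
    (Complex.mem_slitPlane_iff_not_le_zero.2 hρ0)
  have hw0 : w ≠ 0 := by rintro rfl; simp at hw
  have hw' : 0 < w⁻¹.re := by rw [Complex.inv_re]; exact div_pos hw (Complex.normSq_pos.2 hw0)
  have hsplit : x + w ^ 2 • y = w • (w⁻¹ • x + w • y) := by
    rw [smul_add, smul_smul, smul_smul, mul_inv_cancel₀ hw0, one_smul, sq]
  have hroot := (Polynomial.isRoot_of_mem_roots hρ).eq_zero
  rw [eval_restrictToLine, hsplit, hhom.eval_smul] at hroot
  refine mul_ne_zero (pow_ne_zero _ hw0) (hP _ fun i => ?_) hroot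
  obtain ⟨hx₁, hx₂⟩ := Complex.pos_iff.1 (hx i)
  obtain ⟨hy₁, hy₂⟩ := Complex.pos_iff.1 (hy i)
  simp only [Pi.add_apply, Pi.smul_apply, smul_eq_mul, Complex.add_re, Complex.mul_re, ← hx₂,
    ← hy₂, mul_zero, sub_zero]
  nlinarith [mul_pos hw' hx₁, mul_pos hw hy₁]

theorem eval_div_eval_add_pos (hP : HasHalfPlaneProperty P) (hhom : P.IsHomogeneous d)
    {x y : σ → ℂ} (hx : ∀ i, 0 < x i) (hy : ∀ i, 0 < y i) :
    0 < eval x P / eval (x + y) P := by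
  have hxy : ∀ i, 0 < (x + y) i := fun i => add_pos (hx i) (hy i)
  simpa [eval_restrictToLine] using Polynomial.eval_div_eval_pos_of_roots_nonpos
    (fun ρ hρ => hP.nonpos_of_mem_roots_restrictToLine hhom hx hy hρ) le_rfl zero_le_one
    (by simpa [eval_restrictToLine] using hP.eval_ne_zero_of_pos hx)
    (by simpa [eval_restrictToLine] using hP.eval_ne_zero_of_pos hxy)

theorem eval_div_eval_pos (hP : HasHalfPlaneProperty P) (hhom : P.IsHomogeneous d)
    {x y : σ → ℂ} (hx : ∀ i, 0 < x i) (hy : ∀ i, 0 < y i) : 0 < eval x P / eval y P := by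
  have h := div_pos (hP.eval_div_eval_add_pos hhom hx hy) (hP.eval_div_eval_add_pos hhom hy hx)
  rwa [add_comm y, div_div_div_cancel_right₀
    (hP.eval_ne_zero_of_pos (x := x + y) fun i => add_pos (hx i) (hy i))] at h

theorem re_neg_of_mem_rootSet_restrictToLine (hP : HasHalfPlaneProperty P) {x y : σ → ℂ}
    (hx : ∀ i, 0 < (x i).re) (hy : ∀ i, 0 ≤ y i) {ρ : ℂ}
    (hρ : ρ ∈ (P.restrictToLine x y).rootSet ℂ) : ρ.re < 0 := by
  rw [Polynomial.mem_rootSet, Polynomial.coe_aeval_eq_eval, eval_restrictToLine] at hρ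
  by_contra! hρ0
  refine hP _ (fun i => ?_) hρ.2
  obtain ⟨hy₁, hy₂⟩ := Complex.nonneg_iff.1 (hy i)
  simp only [Pi.add_apply, Pi.smul_apply, smul_eq_mul, Complex.add_re, Complex.mul_re, ← hy₂,
    mul_zero, sub_zero]
  nlinarith [hx i, mul_nonneg hρ0 hy₁]

theorem directionalDeriv [Fintype σ] (hP : HasHalfPlaneProperty P)
    (hhom : P.IsHomogeneous d) (hd : d ≠ 0) {y : σ → ℂ} (hy : ∀ i, 0 < y i) :
    HasHalfPlaneProperty (MvPolynomial.directionalDeriv y P) := by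
  intro x hx h0
  set f := P.restrictToLine x y
  have hdeg : 0 < f.degree := by
    refine lt_of_lt_of_le ?_ (Polynomial.le_degree_of_ne_zero (n := d) ?_)
    · exact_mod_cast Nat.pos_of_ne_zero hd
    · rw [hhom.coeff_restrictToLine]
      exact hP.eval_ne_zero_of_pos hy
  have hcrit : f.derivative.rootSet ℂ ⊆ {z : ℂ | z.re < 0} :=
    (Polynomial.rootSet_derivative_subset_convexHull_rootSet hdeg).trans <| convexHull_min
      (fun ρ hρ => hP.re_neg_of_mem_rootSet_restrictToLine hx (fun i => (hy i).le) hρ)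
      (convex_halfSpace_re_lt 0)
  have h0mem : (0 : ℂ) ∈ f.derivative.rootSet ℂ := by
    rw [Polynomial.mem_rootSet, Ne, Polynomial.derivative_eq_zero, Polynomial.coe_aeval_eq_eval,
      derivative_restrictToLine, eval_restrictToLine, zero_smul, add_zero]
    exact ⟨(Polynomial.natDegree_pos_iff_degree_pos.2 hdeg).ne', h0⟩
  simpa using hcrit h0mem

theorem coeff_div_eval_nonneg [Fintype σ] (hP : HasHalfPlaneProperty P)
    (hhom : P.IsHomogeneous d) {β : σ → ℂ} (hβ : ∀ i, 0 < β i) (m : σ →₀ ℕ) :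
    0 ≤ P.coeff m / eval β P := by
  classical
  induction d generalizing P m with
  | zero =>
    rw [totalDegree_eq_zero_iff_eq_C.1 ((totalDegree_zero_iff_isHomogeneous σ).2 hhom), coeff_C,
      eval_C]
    rcases eq_or_ne (P.coeff 0) 0 with h | h <;> split_ifs <;> simp [h]
  | succ d ih =>
    have hderiv : ∀ y : σ → ℂ, (∀ i, 0 < y i) → ∀ κ,
        0 ≤ (MvPolynomial.directionalDeriv y P).coeff κ / eval β P := by
      intro y hy κ
      set Q := MvPolynomial.directionalDeriv y P
      have hQ : HasHalfPlaneProperty Q := hP.directionalDeriv hhom d.succ_ne_zero hy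
      have hQhom : Q.IsHomogeneous d := hhom.directionalDeriv y
      have hQP : 0 < eval β Q / eval β P := by
        have hQy := hQ.eval_ne_zero_of_pos hy
        have hPy := hP.eval_ne_zero_of_pos hy
        have hPβ := hP.eval_ne_zero_of_pos hβ
        calc 0 < eval β Q / eval y Q * (d + 1 : ℕ) * (eval y P / eval β P) :=
              mul_pos (mul_pos (hQ.eval_div_eval_pos hQhom hβ hy) (by exact_mod_cast d.succ_pos))
                (hP.eval_div_eval_pos hhom hy hβ)
          _ = eval β Q / eval β P := by
              rw [hhom.eval_directionalDeriv_self y] at hQy ⊢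
              field_simp
      rw [← div_mul_div_cancel₀ (hQ.eval_ne_zero_of_pos hβ)]
      exact mul_nonneg (ih hQ hQhom κ) hQP.le
    have hcoeff : ∀ κ j, 0 ≤ P.coeff (κ + Finsupp.single j 1) / eval β P := by
      intro κ j
      have h := Complex.nonneg_of_forall_pos_sum_mul_nonneg
        (fun j => P.coeff (κ + Finsupp.single j 1) * (κ j + 1) / eval β P)
        (fun y hy => by
          simpa [coeff_directionalDeriv, Finset.sum_div, mul_div_assoc] using hderiv y hy κ) j
      have hκ : (0 : ℂ) < κ j + 1 := Nat.cast_add_one_pos _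
      rw [mul_div_right_comm] at h
      simpa [hκ.ne'] using div_nonneg h hκ.le
    by_cases hm : P.coeff m = 0
    · simp [hm]
    have hm0 : m ≠ 0 := by
      rintro rfl
      exact hm (hhom.coeff_eq_zero (by simp))
    obtain ⟨j, hj⟩ := Finsupp.ne_iff.1 hm0
    rw [← tsub_add_cancel_of_le (Finsupp.single_le_iff.2 (Nat.one_le_iff_ne_zero.2 hj))]
    exact hcoeff _ j

end HasHalfPlaneProperty

theorem stmt12_general {n r : ℕ} (P : MvPolynomial (Fin n) ℂ) (hhom : P.IsHomogeneous r)
    (hP : ∀ x : Fin n → ℂ, (∀ i, 0 < (x i).re) → MvPolynomial.eval x P ≠ 0) :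
    ∃ θ : ℝ, ∀ m ∈ P.support, ∃ c : ℝ, 0 < c ∧
      P.coeff m = Complex.exp (θ * Complex.I) * (c : ℂ) := by
  have hHP : HasHalfPlaneProperty P := hP
  set w := MvPolynomial.eval (fun _ => 1) P
  have hw : w ≠ 0 := hHP.eval_ne_zero_of_pos fun _ => zero_lt_one
  refine ⟨w.arg, fun m hm => ?_⟩
  have hpos : 0 < P.coeff m / w :=
    lt_of_le_of_ne (hHP.coeff_div_eval_nonneg hhom (fun _ => zero_lt_one) m)
      (div_ne_zero (MvPolynomial.mem_support_iff.1 hm) hw).symm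
  obtain ⟨c, hc, hcm⟩ := RCLike.pos_iff_exists_ofReal.1 hpos
  replace hcm : (c : ℂ) = P.coeff m / w := hcm
  refine ⟨‖w‖ * c, mul_pos (norm_pos_iff.2 hw) hc, ?_⟩
  calc P.coeff m = w * c := by rw [hcm, mul_div_cancel₀ _ hw]
    _ = _ := by
      conv_lhs => rw [← Complex.norm_mul_exp_arg_mul_I w]
      push_cast
      ring

theorem stmt12 {n r : ℕ} (P : MvPolynomial (Fin n) ℂ) (hhom : P.IsHomogeneous r)
    (hne : P ≠ 0)
    (hP : ∀ x : Fin n → ℂ, (∀ i, 0 < (x i).re) → MvPolynomial.eval x P ≠ 0) :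
    ∃ θ : ℝ, ∀ m ∈ P.support, ∃ c : ℝ, 0 < c ∧
      P.coeff m = Complex.exp (θ * Complex.I) * (c : ℂ) :=
  stmt12_general P hhom hP
end

section
/- Let P(x) = ∑_{S ⊆ E, |S|=r} a_S x^S be a multiaffine homogeneous polynomial of degree r on a finite ground set E that is nonvanishing on H^E and not identically zero. Then the support {S : a_S ≠ 0} satisfies the basis-exchange axiom: for any S, T in the support and any e ∈ S \ T, there exists f ∈ T \ S with (S \ {e}) ∪ {f} in the support. -/
/-!
Suppose `e` has no exchange partner in `T \ S`. Evaluate `P` at `x` with `x_e = ζ` and, writing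
`w_i = t v` on `S` and `w_i = v` off `S`, `x_i = s w_i` on `S ∩ T`, `x_i = w_i` on `S △ T` and
`x_i = w_i / s` off `S ∪ T`. Being multiaffine, `P(x) = ζ c₁(s) + c₀(s)`, and after division by
`s^|S ∩ T|` only the monomials `x^B` with `S ∩ T ⊆ B ⊆ S ∪ T` survive as `s → ∞`: the limits are
`v^(r-1) a(t)` and `v^r b(t)` for polynomials `a`, `b`. By homogeneity `a` has degree `|S| - 1`
with top coefficient that of `x^S`, and `b(0)` is the coefficient of `x^T`; the missing exchanges
kill the coefficient of `t^(|S|-1)` in `b`, so `deg b < deg a`. Moving `t` to infinity along a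
suitable ray then gives `t v, v ∈ H` with `Re (-v b(t) / a(t)) > 0`, so for large `s` the root
`ζ = -c₀ / c₁` lies in `H` as well, contradicting the half-plane property.
-/

open Finset Filter Topology

namespace HalfPlaneProperty

variable {σ : Type*}

noncomputable def sqfreeExp (A : Finset σ) : σ →₀ ℕ := ∑ i ∈ A, Finsupp.single i 1

section sqfreeExp

variable [DecidableEq σ]

lemma sqfreeExp_apply (A : Finset σ) (i : σ) : sqfreeExp A i = if i ∈ A then 1 else 0 := by
  simp [sqfreeExp, Finsupp.finsetSum_apply, Finsupp.single_apply]

lemma support_sqfreeExp (A : Finset σ) : (sqfreeExp A).support = A := by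
  ext i; simp [sqfreeExp_apply]

lemma sqfreeExp_injective : Function.Injective (sqfreeExp (σ := σ)) := fun A B h => by
  rw [← support_sqfreeExp A, h, support_sqfreeExp]

lemma sqfreeExp_support_of_le_one {d : σ →₀ ℕ} (hd : ∀ i, d i ≤ 1) :
    sqfreeExp d.support = d := by
  ext i
  have := hd i
  by_cases hi : d i = 0 <;> simp [sqfreeExp_apply, hi]
  omega

end sqfreeExp

lemma degree_sqfreeExp (A : Finset σ) : (sqfreeExp A).degree = #A := by
  simp [sqfreeExp, map_sum, Finsupp.degree_single]

section Multiaffine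

open MvPolynomial

variable {R : Type*} [CommRing R]

lemma le_one_of_mem_support {P : MvPolynomial σ R} (hP : ∀ i, P.degreeOf i ≤ 1)
    {d : σ →₀ ℕ} (hd : d ∈ P.support) (i : σ) : d i ≤ 1 :=
  (monomial_le_degreeOf i hd).trans (hP i)

lemma card_eq_of_coeff_sqfreeExp_ne_zero {P : MvPolynomial σ R} {r : ℕ}
    (hP : P.IsHomogeneous r) {A : Finset σ} (hA : P.coeff (sqfreeExp A) ≠ 0) : #A = r := by
  by_contra h
  exact hA (hP.coeff_eq_zero (by rwa [degree_sqfreeExp]))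

lemma eval_eq_sum_sqfreeExp [Fintype σ] [DecidableEq σ] {P : MvPolynomial σ R}
    (hP : ∀ i, P.degreeOf i ≤ 1) (x : σ → R) :
    eval x P = ∑ A : Finset σ, P.coeff (sqfreeExp A) * ∏ i ∈ A, x i := by
  have hsub : P.support ⊆ univ.image sqfreeExp := fun d hd =>
    mem_image.2 ⟨d.support, mem_univ _,
      sqfreeExp_support_of_le_one (le_one_of_mem_support hP hd)⟩
  rw [eval_eq', sum_subset hsub fun d _ hd => by rw [notMem_support_iff.1 hd, zero_mul],
    sum_image fun A _ B _ h => sqfreeExp_injective h]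
  refine sum_congr rfl fun A _ => congrArg _ ?_
  simp_rw [sqfreeExp_apply, pow_ite, pow_one, pow_zero, prod_ite_mem, univ_inter]

lemma sum_mul_prod_update [Fintype σ] [DecidableEq σ] (c : Finset σ → R) (x : σ → R) (e : σ)
    (ζ : R) :
    ∑ A, c A * ∏ i ∈ A, Function.update x e ζ i =
      ζ * ∑ B ∈ (univ.erase e).powerset, c (insert e B) * ∏ i ∈ B, x i +
        ∑ B ∈ (univ.erase e).powerset, c B * ∏ i ∈ B, x i := by
  have hB : ∀ B ∈ (univ.erase e).powerset, e ∉ B := fun B hB h =>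
    notMem_erase e univ (mem_powerset.1 hB h)
  conv_lhs => rw [← powerset_univ, ← insert_erase (mem_univ e),
    sum_powerset_insert (notMem_erase e univ)]
  rw [add_comm, mul_sum]
  congr 1 <;> refine sum_congr rfl fun B hBe => ?_
  · rw [prod_insert (hB B hBe), Function.update_self, prod_update_of_notMem (hB B hBe)]; ring
  · rw [prod_update_of_notMem (hB B hBe)]

end Multiaffine

section Analytic

open Polynomial Bornology

lemma eventually_ne_zero_and_re_div_pos {α : Type*} {l : Filter α} {f g : α → ℂ} {A B : ℂ}
    (hf : Tendsto f l (𝓝 A)) (hg : Tendsto g l (𝓝 B)) (hA : A ≠ 0) (hBA : 0 < (B / A).re) :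
    ∀ᶠ x in l, f x ≠ 0 ∧ 0 < (g x / f x).re :=
  (hf.eventually_ne hA).and
    (((Complex.continuous_re.tendsto _).comp (hg.div hf hA)).eventually (lt_mem_nhds hBA))

lemma tendsto_eval_div_pow_natDegree_cobounded {K : Type*} [NormedField K] (p : K[X]) :
    Tendsto (fun z => p.eval z / z ^ p.natDegree) (cobounded K) (𝓝 p.leadingCoeff) := by
  have hrev : Tendsto (fun z : K => p.reverse.eval z⁻¹) (cobounded K) (𝓝 p.leadingCoeff) := by
    rw [← coeff_zero_reverse, coeff_zero_eq_eval_zero]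
    exact (p.reverse.continuous.tendsto 0).comp tendsto_inv₀_cobounded
  refine hrev.congr' ((eventually_ne_cobounded 0).mono fun z hz => ?_)
  let := invertibleOfNonzero hz
  have := eval₂_reverse_mul_pow (RingHom.id K) z p
  rw [eq_div_iff (pow_ne_zero _ hz), ← eval, ← eval, invOf_eq_inv] at *
  exact this

lemma exists_re_pos_pow_eq {z : ℂ} (hz : z ≠ 0) {N : ℕ} (hN : 3 ≤ N) :
    ∃ ρ : ℂ, 0 < ρ.re ∧ ρ ^ N = z := by
  have hN0 : (N : ℂ) ≠ 0 := by exact_mod_cast (show N ≠ 0 by omega)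
  refine ⟨Complex.exp (Complex.log z / N), ?_, ?_⟩
  · rw [Complex.exp_re, Complex.div_natCast_im, Complex.log_im]
    refine mul_pos (Real.exp_pos _) (Real.cos_pos_of_mem_Ioo ?_)
    have hN' : (3 : ℝ) ≤ N := by exact_mod_cast hN
    have := Complex.neg_pi_lt_arg z
    have := Complex.arg_le_pi z
    have := Real.pi_pos
    constructor
    · rw [lt_div_iff₀ (by linarith)]; nlinarith
    · rw [div_lt_iff₀ (by linarith)]; nlinarith
  · rw [← Complex.exp_nat_mul, mul_div_cancel₀ _ hN0, Complex.exp_log hz]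

/-- Along `t = R / ρ²` with `ρ^(2m+1) = -lc(a)/lc(b)`, `m = deg a - deg b`, the quotient
`-ρ b(t) / a(t)` is asymptotic to the positive real `R⁻ᵐ`, while `t ρ = R / ρ` and `ρ` stay in the
right half-plane. -/
lemma exists_re_pos_neg_mul_eval_div_eval {a b : ℂ[X]} (hb : b ≠ 0)
    (hab : b.natDegree < a.natDegree) :
    ∃ t v : ℂ, 0 < (t * v).re ∧ 0 < v.re ∧ a.eval t ≠ 0 ∧
      0 < (-(v * b.eval t) / a.eval t).re := by
  set m := a.natDegree - b.natDegree
  have ha : a ≠ 0 := ne_zero_of_natDegree_gt hab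
  have hla : a.leadingCoeff ≠ 0 := leadingCoeff_ne_zero.2 ha
  have hlb : b.leadingCoeff ≠ 0 := leadingCoeff_ne_zero.2 hb
  obtain ⟨ρ, hρ, hρpow⟩ := exists_re_pos_pow_eq (z := -(a.leadingCoeff / b.leadingCoeff))
    (by simp [hla, hlb]) (N := 2 * m + 1) (by omega)
  have hρ0 : ρ ≠ 0 := fun h => by simp [h] at hρ
  set t : ℝ → ℂ := fun R => R * (ρ ^ 2)⁻¹
  have ht : Tendsto t atTop (cobounded ℂ) :=
    (tendsto_mul_right_cobounded (inv_ne_zero (pow_ne_zero 2 hρ0))).comp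
      (RCLike.tendsto_ofReal_atTop_cobounded ℂ)
  have hf := (tendsto_eval_div_pow_natDegree_cobounded a).comp ht
  have hg := ((tendsto_eval_div_pow_natDegree_cobounded b).comp ht).const_mul (-ρ ^ (2 * m + 1))
  have hlim : -ρ ^ (2 * m + 1) * b.leadingCoeff = a.leadingCoeff := by
    rw [hρpow, neg_neg, div_mul_cancel₀ _ hlb]
  rw [hlim] at hg
  obtain ⟨R, ⟨hfR, hreR⟩, hR⟩ := ((eventually_ne_zero_and_re_div_pos hf hg hla
    (by simp [div_self hla])).and (eventually_gt_atTop 0)).exists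
  refine ⟨t R, ρ, ?_, hρ, (div_ne_zero_iff.1 hfR).1, ?_⟩
  · have : t R * ρ = (R : ℂ) * ρ⁻¹ := by simp only [t]; field_simp
    rw [this, Complex.re_ofReal_mul, Complex.inv_re]
    exact mul_pos hR (div_pos hρ (Complex.normSq_pos.2 hρ0))
  · have htR : t R ≠ 0 := by simp [t, hR.ne', hρ0]
    have hpow : t R ^ a.natDegree = t R ^ b.natDegree * ((R : ℂ) ^ m / ρ ^ (2 * m)) := by
      rw [show a.natDegree = b.natDegree + m by omega, pow_add, pow_mul]
      simp only [t, mul_pow, inv_pow, div_eq_mul_inv]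
    have key : -ρ ^ (2 * m + 1) * (b.eval (t R) / t R ^ b.natDegree) /
        (a.eval (t R) / t R ^ a.natDegree) =
        ((R ^ m : ℝ) : ℂ) * (-(ρ * b.eval (t R)) / a.eval (t R)) := by
      rw [hpow]; push_cast; field_simp; ring
    simp only [Function.comp, key, Complex.re_ofReal_mul] at hreR
    exact pos_of_mul_pos_right hreR (by positivity)

end Analytic

variable [DecidableEq σ]

noncomputable def scalingWeight (I M : Finset σ) (s : ℝ) (i : σ) : ℝ :=
  if i ∈ I then s else if i ∈ M then 1 else s⁻¹

lemma scalingWeight_pos (I M : Finset σ) {s : ℝ} (hs : 0 < s) (i : σ) :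
    0 < scalingWeight I M s i := by
  unfold scalingWeight; split_ifs <;> positivity

lemma prod_scalingWeight_div_pow {I M : Finset σ} (hIM : I ⊆ M) (B : Finset σ) {s : ℝ}
    (hs : s ≠ 0) : (∏ i ∈ B, scalingWeight I M s i) / s ^ #I = s⁻¹ ^ (#(I \ B) + #(B \ M)) := by
  have hsplit : ∀ i, scalingWeight I M s i =
      (if i ∈ I then s else 1) * (if i ∉ M then s⁻¹ else 1) := fun i => by
    unfold scalingWeight
    by_cases hI : i ∈ I
    · simp [hI, hIM hI]
    · by_cases hM : i ∈ M <;> simp [hI, hM]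
  simp_rw [hsplit, prod_mul_distrib, prod_ite_mem, ← prod_filter, filter_notMem_eq_sdiff,
    prod_const, ← card_sdiff_add_card_inter I B, inter_comm B I, pow_add, inv_pow]
  field_simp

lemma tendsto_prod_scalingWeight_div_pow {I M : Finset σ} (hIM : I ⊆ M) (B : Finset σ) :
    Tendsto (fun s => (∏ i ∈ B, scalingWeight I M s i) / s ^ #I) atTop
      (𝓝 (if I ⊆ B ∧ B ⊆ M then 1 else 0)) := by
  have hlim : Tendsto (fun s : ℝ => s⁻¹ ^ (#(I \ B) + #(B \ M))) atTop
      (𝓝 (0 ^ (#(I \ B) + #(B \ M)))) := tendsto_inv_atTop_zero.pow _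
  simp only [zero_pow_eq, Nat.add_eq_zero_iff, card_eq_zero, sdiff_eq_empty_iff_subset] at hlim
  refine hlim.congr' ((eventually_ne_atTop 0).mono fun s hs => ?_)
  exact (prod_scalingWeight_div_pow hIM B hs).symm

section Combinatorics

variable {S T B : Finset σ} {e : σ}

lemma card_inter_le_card_sub_one (heS : e ∈ S) (heB : e ∉ B) : #(B ∩ S) ≤ #S - 1 := by
  rw [← card_erase_of_mem heS]
  exact card_le_card fun i hi => mem_erase.2 ⟨ne_of_mem_of_not_mem (mem_inter.1 hi).1 heB,
    (mem_inter.1 hi).2⟩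

lemma erase_subset_of_card_inter_eq (heS : e ∈ S) (heB : e ∉ B) (h : #(B ∩ S) = #S - 1) :
    S.erase e ⊆ B := by
  have hsub : B ∩ S ⊆ S.erase e := fun i hi =>
    mem_erase.2 ⟨ne_of_mem_of_not_mem (mem_inter.1 hi).1 heB, (mem_inter.1 hi).2⟩
  rw [← eq_of_subset_of_card_le hsub (by rw [card_erase_of_mem heS, h])]
  exact inter_subset_left

lemma eq_of_card_inter_eq (hTB : S ∩ T ⊆ B) (hB : B ⊆ S ∪ T) (h : #(B ∩ S) = #(S ∩ T))
    (hcard : #B = #T) : B = T := by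
  have hBS : S ∩ T = B ∩ S := eq_of_subset_of_card_le
    (fun i hi => mem_inter.2 ⟨hTB hi, (mem_inter.1 hi).1⟩) h.le
  refine eq_of_subset_of_card_le (fun i hi => ?_) hcard.ge
  by_cases hiS : i ∈ S
  · exact (mem_inter.1 (hBS ▸ mem_inter.2 ⟨hi, hiS⟩ : i ∈ S ∩ T)).2
  · exact (mem_union.1 (hB hi)).resolve_left hiS

lemma exists_eq_insert_erase (heS : e ∈ S) (heB : e ∉ B) (hB : B ⊆ S ∪ T)
    (hSB : S.erase e ⊆ B) (hcard : #B = #S) : ∃ f ∈ T \ S, B = insert f (S.erase e) := by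
  obtain ⟨f, hf, rfl⟩ := exists_eq_insert_iff.2
    ⟨hSB, by rw [card_erase_of_mem heS, hcard]; have := card_pos.2 ⟨e, heS⟩; omega⟩
  have hfS : f ∉ S := fun h => hf (mem_erase.2 ⟨fun hfe => heB (hfe ▸ mem_insert_self f _), h⟩)
  exact ⟨f, mem_sdiff.2 ⟨(mem_union.1 (hB (mem_insert_self f _))).resolve_left hfS, hfS⟩, rfl⟩

end Combinatorics

lemma mem_powerset_erase_univ [Fintype σ] {B : Finset σ} {e : σ} :
    B ∈ (univ.erase e).powerset ↔ e ∉ B := by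
  simp [subset_erase]

section Exchange

open Polynomial

variable (S T : Finset σ)

noncomputable def testPoint (t v : ℂ) (s : ℝ) (i : σ) : ℂ :=
  scalingWeight (S ∩ T) (S ∪ T) s i * ((if i ∈ S then t else 1) * v)

lemma re_testPoint_pos {t v : ℂ} (htv : 0 < (t * v).re) (hv : 0 < v.re) {s : ℝ} (hs : 0 < s)
    (i : σ) : 0 < (testPoint S T t v s i).re := by
  rw [testPoint, Complex.re_ofReal_mul]
  refine mul_pos (scalingWeight_pos _ _ hs i) ?_
  split_ifs
  exacts [htv, by rwa [one_mul]]

lemma prod_testPoint (t v : ℂ) (s : ℝ) (B : Finset σ) : ∏ i ∈ B, testPoint S T t v s i =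
    (∏ i ∈ B, scalingWeight (S ∩ T) (S ∪ T) s i : ℝ) * (t ^ #(B ∩ S) * v ^ #B) := by
  simp only [testPoint, prod_mul_distrib, prod_ite_mem, prod_const, Complex.ofReal_prod]

variable [Fintype σ] (e : σ)

noncomputable def exchangePoly {R : Type*} [Semiring R] (c : Finset σ → R) : R[X] :=
  ∑ B ∈ (univ.erase e).powerset with S ∩ T ⊆ B ∧ B ⊆ S ∪ T, C (c B) * X ^ #(B ∩ S)

lemma eval_exchangePoly {R : Type*} [CommSemiring R] (c : Finset σ → R) (t : R) :
    (exchangePoly S T e c).eval t =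
      ∑ B ∈ (univ.erase e).powerset with S ∩ T ⊆ B ∧ B ⊆ S ∪ T, c B * t ^ #(B ∩ S) := by
  simp [exchangePoly, eval_finsetSum]

lemma tendsto_sum_mul_prod_testPoint (c : Finset σ → ℂ) {N : ℕ}
    (hc : ∀ B ∈ (univ.erase e).powerset, c B ≠ 0 → #B = N) (t v : ℂ) :
    Tendsto (fun s : ℝ =>
        (∑ B ∈ (univ.erase e).powerset, c B * ∏ i ∈ B, testPoint S T t v s i) / (s : ℂ) ^ #(S ∩ T))
      atTop (𝓝 (v ^ N * (exchangePoly S T e c).eval t)) := by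
  have hweight (B : Finset σ) := (Complex.continuous_ofReal.tendsto _).comp
    (tendsto_prod_scalingWeight_div_pow (inter_subset_union (s := S) (t := T)) B)
  have hlim := tendsto_finsetSum (univ.erase e).powerset fun B _ =>
    ((hweight B).const_mul (c B)).mul_const (t ^ #(B ∩ S) * v ^ #B)
  convert hlim using 2 with s
  · simp only [sum_div, prod_testPoint, Function.comp, Complex.ofReal_div, Complex.ofReal_pow]
    refine sum_congr rfl fun B _ => ?_
    ring
  · rw [eval_exchangePoly, mul_sum, sum_filter]
    refine sum_congr rfl fun B hB => ?_
    by_cases hcB : c B = 0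
    · simp [hcB]
    · split_ifs <;> simp [hc B hB hcB]; ring

section Coefficients

variable {R : Type*} [Semiring R] (c : Finset σ → R)

lemma coeff_exchangePoly (q : ℕ) : (exchangePoly S T e c).coeff q =
    ∑ B ∈ (univ.erase e).powerset with S ∩ T ⊆ B ∧ B ⊆ S ∪ T,
      if q = #(B ∩ S) then c B else 0 := by
  simp only [exchangePoly, finsetSum_coeff, coeff_C_mul_X_pow]

variable {S T e}

lemma natDegree_exchangePoly_le (heS : e ∈ S) : (exchangePoly S T e c).natDegree ≤ #S - 1 :=
  natDegree_sum_le_of_forall_le _ _ fun _ hB => (natDegree_C_mul_X_pow_le _ _).trans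
    (card_inter_le_card_sub_one heS (mem_powerset_erase_univ.1 (mem_filter.1 hB).1))

lemma coeff_exchangePoly_insert (hc : ∀ A, c A ≠ 0 → #A = #S) (heS : e ∈ S) (heT : e ∉ T) :
    (exchangePoly S T e fun B => c (insert e B)).coeff (#S - 1) = c S := by
  have hmem : S.erase e ∈ (univ.erase e).powerset.filter (fun B => S ∩ T ⊆ B ∧ B ⊆ S ∪ T) :=
    mem_filter.2 ⟨mem_powerset_erase_univ.2 (notMem_erase e S),
      fun i hi => mem_erase.2 ⟨ne_of_mem_of_not_mem (mem_inter.1 hi).2 heT, (mem_inter.1 hi).1⟩,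
      (erase_subset e S).trans subset_union_left⟩
  have hcard : #(S.erase e ∩ S) = #S - 1 := by
    rw [inter_eq_left.2 (erase_subset e S), card_erase_of_mem heS]
  rw [coeff_exchangePoly, sum_eq_single_of_mem _ hmem, if_pos hcard.symm, insert_erase heS]
  intro B hB hBS
  obtain ⟨hBe, -⟩ := mem_filter.1 hB
  have heB := mem_powerset_erase_univ.1 hBe
  split_ifs with hq
  · by_contra hcB
    have hcard := hc _ hcB
    rw [card_insert_of_notMem heB] at hcard
    exact hBS (eq_of_subset_of_card_le (erase_subset_of_card_inter_eq heS heB hq.symm)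
      (by rw [card_erase_of_mem heS]; omega)).symm
  · rfl

lemma coeff_exchangePoly_card_inter (hc : ∀ A, c A ≠ 0 → #A = #T) (heT : e ∉ T) :
    (exchangePoly S T e c).coeff #(S ∩ T) = c T := by
  have hmem : T ∈ (univ.erase e).powerset.filter (fun B => S ∩ T ⊆ B ∧ B ⊆ S ∪ T) :=
    mem_filter.2 ⟨mem_powerset_erase_univ.2 heT, inter_subset_right, subset_union_right⟩
  rw [coeff_exchangePoly, sum_eq_single_of_mem _ hmem, if_pos (by rw [inter_comm])]
  intro B hB hBT
  obtain ⟨-, hTB, hBST⟩ := mem_filter.1 hB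
  split_ifs with hq
  · by_contra hcB
    exact hBT (eq_of_card_inter_eq hTB hBST hq.symm (hc B hcB))
  · rfl

lemma coeff_exchangePoly_eq_zero (hc : ∀ A, c A ≠ 0 → #A = #S) (heS : e ∈ S)
    (hno : ∀ f ∈ T \ S, c (insert f (S.erase e)) = 0) :
    (exchangePoly S T e c).coeff (#S - 1) = 0 := by
  rw [coeff_exchangePoly]
  refine sum_eq_zero fun B hB => ?_
  obtain ⟨hBe, -, hBST⟩ := mem_filter.1 hB
  have heB := mem_powerset_erase_univ.1 hBe
  split_ifs with hq
  · by_contra hcB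
    obtain ⟨f, hf, rfl⟩ := exists_eq_insert_erase heS heB hBST
      (erase_subset_of_card_inter_eq heS heB hq.symm) (hc _ hcB)
    exact hcB (hno f hf)
  · rfl

end Coefficients

lemma exists_eval_eq_zero_of_re_pos {P : MvPolynomial σ ℂ} {r : ℕ}
    (hmaff : ∀ i, P.degreeOf i ≤ 1) (hhom : P.IsHomogeneous r) (hr : 0 < r) {t v : ℂ}
    (htv : 0 < (t * v).re) (hv : 0 < v.re)
    (ha : (exchangePoly S T e fun B => P.coeff (sqfreeExp (insert e B))).eval t ≠ 0)
    (hre : 0 < (-(v * (exchangePoly S T e fun B => P.coeff (sqfreeExp B)).eval t) /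
      (exchangePoly S T e fun B => P.coeff (sqfreeExp (insert e B))).eval t).re) :
    ∃ x : σ → ℂ, (∀ i, 0 < (x i).re) ∧ MvPolynomial.eval x P = 0 := by
  have h1 := tendsto_sum_mul_prod_testPoint S T e (fun B => P.coeff (sqfreeExp (insert e B)))
    (N := r - 1) (fun B hB hB0 => by
      have := card_eq_of_coeff_sqfreeExp_ne_zero hhom hB0
      rw [card_insert_of_notMem (mem_powerset_erase_univ.1 hB)] at this
      omega) t v
  have h0 := (tendsto_sum_mul_prod_testPoint S T e (fun B => P.coeff (sqfreeExp B)) (N := r)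
    (fun _ _ => card_eq_of_coeff_sqfreeExp_ne_zero hhom) t v).neg
  have hv0 : v ≠ 0 := fun h => by simp [h] at hv
  set pa := exchangePoly S T e fun B => P.coeff (sqfreeExp (insert e B))
  set pb := exchangePoly S T e fun B => P.coeff (sqfreeExp B)
  have hratio :
      -(v ^ r * pb.eval t) / (v ^ (r - 1) * pa.eval t) = -(v * pb.eval t) / pa.eval t := by
    obtain ⟨k, rfl⟩ := Nat.exists_eq_add_of_lt hr
    simp only [zero_add, Nat.add_sub_cancel, pow_succ]
    field_simp
  obtain ⟨s, ⟨hc1, hpos⟩, hs⟩ := ((eventually_ne_zero_and_re_div_pos h1 h0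
    (mul_ne_zero (pow_ne_zero _ hv0) ha) (hratio ▸ hre)).and (eventually_gt_atTop 0)).exists
  set x := testPoint S T t v s
  set c1 := ∑ B ∈ (univ.erase e).powerset, P.coeff (sqfreeExp (insert e B)) * ∏ i ∈ B, x i
  set c0 := ∑ B ∈ (univ.erase e).powerset, P.coeff (sqfreeExp B) * ∏ i ∈ B, x i
  have hsm : (s : ℂ) ^ #(S ∩ T) ≠ 0 := pow_ne_zero _ (by exact_mod_cast hs.ne')
  have hc1' : c1 ≠ 0 := (div_ne_zero_iff.1 hc1).1
  have hζ : -(c0 / (s : ℂ) ^ #(S ∩ T)) / (c1 / (s : ℂ) ^ #(S ∩ T)) = -c0 / c1 := by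
    field_simp
  rw [hζ] at hpos
  refine ⟨Function.update x e (-c0 / c1), fun i => ?_, ?_⟩
  · rcases eq_or_ne i e with rfl | hi
    · rwa [Function.update_self]
    · rw [Function.update_of_ne hi]
      exact re_testPoint_pos S T htv hv hs i
  · rw [eval_eq_sum_sqfreeExp hmaff, sum_mul_prod_update]
    field_simp
    ring

end Exchange

open Polynomial in
theorem exists_exchange [Fintype σ] {P : MvPolynomial σ ℂ} {r : ℕ}
    (hmaff : ∀ i, P.degreeOf i ≤ 1) (hhom : P.IsHomogeneous r)
    (hP : ∀ x : σ → ℂ, (∀ i, 0 < (x i).re) → MvPolynomial.eval x P ≠ 0) {S T : Finset σ}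
    (hS : P.coeff (sqfreeExp S) ≠ 0) (hT : P.coeff (sqfreeExp T) ≠ 0) {e : σ} (he : e ∈ S \ T) :
    ∃ f ∈ T \ S, P.coeff (sqfreeExp (insert f (S.erase e))) ≠ 0 := by
  by_contra! hno
  obtain ⟨heS, heT⟩ := mem_sdiff.1 he
  set a : Finset σ → ℂ := fun A => P.coeff (sqfreeExp A)
  have hcard : ∀ A, a A ≠ 0 → #A = r := fun _ => card_eq_of_coeff_sqfreeExp_ne_zero hhom
  have hSr : #S = r := hcard S hS
  have hpa := coeff_exchangePoly_insert (T := T) a (hSr ▸ hcard) heS heT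
  have hpb := coeff_exchangePoly_card_inter (S := S) (e := e) a (hcard T hT ▸ hcard) heT
  have hpb' := coeff_exchangePoly_eq_zero (T := T) a (hSr ▸ hcard) heS hno
  have hb : exchangePoly S T e a ≠ 0 := fun h => hT (hpb.symm.trans (by rw [h, coeff_zero]))
  have hdeg : (exchangePoly S T e a).natDegree <
      (exchangePoly S T e fun B => a (insert e B)).natDegree := by
    refine lt_of_lt_of_le ?_ (le_natDegree_of_ne_zero (hpa.trans_ne hS))
    refine (natDegree_exchangePoly_le _ heS).lt_of_ne fun h => hb ?_
    rw [← leadingCoeff_eq_zero, leadingCoeff, h, hpb']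
  obtain ⟨t, v, htv, hv, hat, hre⟩ := exists_re_pos_neg_mul_eval_div_eval hb hdeg
  obtain ⟨x, hx, hx0⟩ := exists_eval_eq_zero_of_re_pos S T e hmaff hhom
    (hSr ▸ card_pos.2 ⟨e, heS⟩) htv hv hat hre
  exact hP x hx hx0

end HalfPlaneProperty

theorem stmt13_general {n r : ℕ} (P : MvPolynomial (Fin n) ℂ)
    (hmaff : ∀ i, P.degreeOf i ≤ 1)
    (hhom : P.IsHomogeneous r)
    (hP : ∀ x : Fin n → ℂ, (∀ i, 0 < (x i).re) → MvPolynomial.eval x P ≠ 0) :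
    ∀ S T : Finset (Fin n),
      P.coeff (∑ i ∈ S, Finsupp.single i 1) ≠ 0 →
      P.coeff (∑ i ∈ T, Finsupp.single i 1) ≠ 0 →
      ∀ e ∈ S \ T, ∃ f ∈ T \ S,
        P.coeff (∑ i ∈ insert f (S.erase e), Finsupp.single i 1) ≠ 0 :=
  fun _ _ hS hT _ he => HalfPlaneProperty.exists_exchange hmaff hhom hP hS hT he

theorem stmt13 {n r : ℕ} (P : MvPolynomial (Fin n) ℂ)
    (hmaff : ∀ i, P.degreeOf i ≤ 1)
    (hhom : P.IsHomogeneous r)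
    (hne : P ≠ 0)
    (hP : ∀ x : Fin n → ℂ, (∀ i, 0 < (x i).re) → MvPolynomial.eval x P ≠ 0) :
    ∀ S T : Finset (Fin n),
      P.coeff (∑ i ∈ S, Finsupp.single i 1) ≠ 0 →
      P.coeff (∑ i ∈ T, Finsupp.single i 1) ≠ 0 →
      ∀ e ∈ S \ T, ∃ f ∈ T \ S,
        P.coeff (∑ i ∈ insert f (S.erase e), Finsupp.single i 1) ≠ 0 :=
  stmt13_general P hmaff hhom hP
end

section
/- Let E_{r,n}(x_1,…,x_n) = ∑_{1≤i_1<…<i_r≤n} x_{i_1}⋯x_{i_r} be the elementary symmetric polynomial of degree r in n variables, with 0 ≤ r ≤ n. Then E_{r,n} is nonvanishing on H^n. -/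
/-!
The roots of `P(t) = ∏ i, (t + x i)` are the points `-x i`, which lie in the open left half-plane.
By Gauss–Lucas the roots of every derivative of `P` stay in that convex set, so in particular
`P^{(n-r)}(0) ≠ 0`; but `P^{(n-r)}(0) = (n-r)! · [t^{n-r}] P = (n-r)! · E_{r,n}(x)` by Vieta.
-/

open Polynomial

namespace Polynomial

theorem rootSet_derivative_subset_of_convex {P : ℂ[X]} {S : Set ℂ} (hS : Convex ℝ S)
    (hP : P.rootSet ℂ ⊆ S) : P.derivative.rootSet ℂ ⊆ S := by
  rcases le_or_gt P.degree 0 with hdeg | hdeg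
  · simp [derivative_of_natDegree_zero (natDegree_eq_zero_iff_degree_le_zero.2 hdeg)]
  · exact (rootSet_derivative_subset_convexHull_rootSet hdeg).trans (convexHull_min hP hS)

theorem rootSet_iterate_derivative_subset_of_convex {P : ℂ[X]} {S : Set ℂ} (hS : Convex ℝ S)
    (hP : P.rootSet ℂ ⊆ S) (k : ℕ) : (derivative^[k] P).rootSet ℂ ⊆ S := by
  induction k with
  | zero => exact hP
  | succ k ih =>
    rw [Function.iterate_succ_apply']
    exact rootSet_derivative_subset_of_convex hS ih

theorem coeff_ne_zero_of_rootSet_subset_of_convex {P : ℂ[X]} {S : Set ℂ} (hS : Convex ℝ S)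
    (h0 : (0 : ℂ) ∉ S) (hP : P.rootSet ℂ ⊆ S) (hP0 : P ≠ 0) {k : ℕ} (hk : k ≤ P.natDegree) :
    P.coeff k ≠ 0 := by
  set Q := derivative^[k] P
  have hQ0 : Q ≠ 0 := by
    have hlead : Q.coeff (P.natDegree - k) ≠ 0 := by
      rw [coeff_iterate_derivative, Nat.sub_add_cancel hk, nsmul_eq_mul]
      exact mul_ne_zero (by exact_mod_cast (Nat.descFactorial_pos.2 hk).ne')
        (leadingCoeff_ne_zero.2 hP0)
    exact fun hQ => hlead (by rw [hQ, coeff_zero])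
  have hQ : Q.eval 0 ≠ 0 := fun h =>
    h0 (rootSet_iterate_derivative_subset_of_convex hS hP k (mem_rootSet.2 ⟨hQ0, by simpa⟩))
  rw [← coeff_zero_eq_eval_zero, coeff_iterate_derivative, zero_add, nsmul_eq_mul] at hQ
  exact right_ne_zero_of_mul hQ

end Polynomial

theorem Multiset.esymm_ne_zero_of_forall_re_pos {s : Multiset ℂ} (hs : ∀ a ∈ s, 0 < a.re)
    {r : ℕ} (hr : r ≤ card s) : s.esymm r ≠ 0 := by
  set P := (s.map fun a => X + C a).prod
  have hP0 : P ≠ 0 := (monic_multiset_prod_of_monic _ _ fun a _ => monic_X_add_C a).ne_zero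
  have hdeg : P.natDegree = card s := by
    rw [natDegree_multiset_prod_of_monic _ (by simpa using fun a _ => monic_X_add_C a)]
    simp
  have hroots : P.rootSet ℂ ⊆ {z | z.re < 0} := by
    intro z hz
    obtain ⟨a, ha, hza⟩ : ∃ a ∈ s, z + a = 0 := by
      simpa [P, eval_multiset_prod, Multiset.prod_eq_zero_iff] using (mem_rootSet.1 hz).2
    simpa [eq_neg_of_add_eq_zero_left hza] using hs a ha
  have := coeff_ne_zero_of_rootSet_subset_of_convex (convex_halfSpace_re_lt 0) (by simp) hroots hP0
    (k := card s - r) (by omega)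
  rwa [Multiset.prod_X_add_C_coeff s (by omega), Nat.sub_sub_self hr] at this

theorem stmt14 {n r : ℕ} (h : r ≤ n) (x : Fin n → ℂ)
    (hx : ∀ i, 0 < (x i).re) :
    MvPolynomial.eval x (MvPolynomial.esymm (Fin n) ℂ r) ≠ 0 := by
  rw [← MvPolynomial.aeval_eq_eval, MvPolynomial.aeval_esymm_eq_multiset_esymm]
  exact Multiset.esymm_ne_zero_of_forall_re_pos (by simpa using hx) (by simpa using h)
end

section
/- For 1 ≤ r ≤ n, the rational function F_{r,n} = E_{r,n}/E_{r−1,n} of elementary symmetric polynomials satisfies Re F_{r,n}(x) > 0 for all x ∈ H^n. -/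
open Polynomial Multiset

private lemma re_inv_pos {z : ℂ} (hz : 0 < z.re) : 0 < z⁻¹.re := by
  have hz0 : z ≠ 0 := fun h => by simp [h] at hz
  rw [Complex.inv_re]
  exact div_pos hz (Complex.normSq_pos.2 hz0)

private lemma sum_re_pos : ∀ (t : Multiset ℂ), t ≠ 0 → (∀ z ∈ t, 0 < z.re) → 0 < t.sum.re := by
  intro t
  refine Multiset.induction_on t (by simp) ?_
  intro a s ih _ h
  clear t
  rw [Multiset.sum_cons, Complex.add_re]
  rcases eq_or_ne s 0 with rfl | hs
  · simpa using h a (by simp)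
  · have h1 := ih hs (fun z hz => h z (Multiset.mem_cons_of_mem hz))
    have h2 := h a (Multiset.mem_cons_self a s)
    linarith

/-- the polynomial ∏ (X + a) -/
noncomputable def PP (s : Multiset ℂ) : Polynomial ℂ :=
  (s.map (fun a => Polynomial.X + Polynomial.C a)).prod

private lemma PP_monic (s : Multiset ℂ) : (PP s).Monic :=
  monic_multiset_prod_of_monic s _ (fun a _ => monic_X_add_C a)

private lemma PP_natDegree (s : Multiset ℂ) : (PP s).natDegree = Multiset.card s := by
  rw [PP, natDegree_multiset_prod_of_monic]
  · simp [Multiset.map_map]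
  · intro f hf
    obtain ⟨a, _, rfl⟩ := Multiset.mem_map.1 hf
    exact monic_X_add_C a

private lemma PP_eval (s : Multiset ℂ) (z : ℂ) :
    (PP s).eval z = (s.map (fun a => z + a)).prod := by
  rw [PP, eval_multiset_prod, Multiset.map_map]
  simp

private lemma PP_eval_ne_zero (s : Multiset ℂ) {z : ℂ} (h : ∀ a ∈ s, z + a ≠ 0) :
    (PP s).eval z ≠ 0 := by
  rw [PP_eval]
  refine Multiset.prod_ne_zero ?_
  intro h0
  obtain ⟨a, ha, ha0⟩ := Multiset.mem_map.1 h0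
  exact h a ha ha0

private lemma PP_coeff (s : Multiset ℂ) {k : ℕ} (h : k ≤ Multiset.card s) :
    (PP s).coeff k = s.esymm (Multiset.card s - k) :=
  Multiset.prod_X_add_C_coeff s h

private lemma PP_deriv_eval (s : Multiset ℂ) {z : ℂ} (h : ∀ a ∈ s, z + a ≠ 0) :
    (derivative (PP s)).eval z = (PP s).eval z * (s.map (fun a => (z + a)⁻¹)).sum := by
  classical
  rw [PP, derivative_prod]
  rw [show (eval z) = ⇑(evalRingHom z) from rfl, map_multiset_sum, Multiset.map_map]
  simp only [coe_evalRingHom]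
  rw [← Multiset.sum_map_mul_left]
  refine congrArg Multiset.sum (Multiset.map_congr rfl ?_)
  intro a ha
  simp only [Function.comp_apply, derivative_add, derivative_X, derivative_C, add_zero,
    mul_one, eval_mul, eval_one]
  have h1 : (PP s).eval z = (z + a) * (PP (s.erase a)).eval z := by
    conv_lhs => rw [show s = a ::ₘ s.erase a from (Multiset.cons_erase ha).symm]
    rw [PP_eval, PP_eval, Multiset.map_cons, Multiset.prod_cons]
  show eval z (PP (s.erase a)) = eval z (PP s) * (z + a)⁻¹
  rw [h1, mul_comm (z+a), mul_assoc, mul_inv_cancel₀ (h a ha), mul_one]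


private lemma key : ∀ n : ℕ, ∀ s : Multiset ℂ, Multiset.card s = n →
    (∀ z ∈ s, 0 < z.re) → ∀ r : ℕ, 1 ≤ r → r ≤ n →
    s.esymm (r - 1) ≠ 0 ∧ 0 < (s.esymm r / s.esymm (r - 1)).re := by
  intro n
  induction n using Nat.strong_induction_on with
  | _ n IH =>
  intro s hcard hs r hr1 hrn
  have hn1 : 1 ≤ n := hr1.trans hrn
  have hs0 : s ≠ 0 := by
    intro h; rw [h] at hcard; simp at hcard; omega
  have hne : ∀ a ∈ s, (0:ℂ) + a ≠ 0 := by
    intro a ha h0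
    have h1 := hs a ha
    rw [zero_add] at h0
    simp [h0] at h1
  set W : ℂ := (s.map (fun a => ((0:ℂ) + a)⁻¹)).sum with hWdef
  have hWre : 0 < W.re := by
    apply sum_re_pos
    · simpa using hs0
    · intro z hz
      obtain ⟨a, ha, rfl⟩ := Multiset.mem_map.1 hz
      exact re_inv_pos (by simpa using hs a ha)
  have hW0 : W ≠ 0 := fun h => by simp [h] at hWre
  have hEn : s.esymm n = (PP s).eval 0 := by
    rw [← coeff_zero_eq_eval_zero, PP_coeff s (by omega), hcard, Nat.sub_zero]
  have hEn0 : (PP s).eval 0 ≠ 0 := PP_eval_ne_zero s hne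
  have hEn1 : s.esymm (n - 1) = (PP s).eval 0 * W := by
    have h1 := coeff_derivative (PP s) 0
    rw [coeff_zero_eq_eval_zero, PP_deriv_eval s hne, ← hWdef] at h1
    norm_num at h1
    rw [PP_coeff s (by omega : 1 ≤ Multiset.card s), hcard] at h1
    exact h1.symm
  rcases eq_or_lt_of_le hrn with rfl | hlt
  · -- r = n
    have h1 : s.esymm (r - 1) ≠ 0 := by rw [hEn1]; exact mul_ne_zero hEn0 hW0
    refine ⟨h1, ?_⟩
    have h2 : s.esymm r / s.esymm (r - 1) = W⁻¹ := by
      rw [hEn, hEn1]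
      field_simp
    rw [h2]
    exact re_inv_pos hWre
  · -- r < n
    have hpcn : (PP s).coeff n = 1 := by
      have h1 := (PP_monic s).coeff_natDegree
      rwa [PP_natDegree, hcard] at h1
    have hqc : (derivative (PP s)).coeff (n - 1) = (n : ℂ) := by
      rw [coeff_derivative, show n - 1 + 1 = n from by omega, hpcn, one_mul]
      push_cast [Nat.cast_sub hn1]
      ring
    have hncast : ((n : ℕ) : ℂ) ≠ 0 := Nat.cast_ne_zero.2 (by omega)
    have hq0 : derivative (PP s) ≠ 0 := by
      intro h; rw [h] at hqc; simp at hqc; exact hncast hqc.symm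
    have hqdeg : (derivative (PP s)).natDegree = n - 1 := by
      refine le_antisymm ?_ (le_natDegree_of_ne_zero (by rw [hqc]; exact hncast))
      have := natDegree_derivative_le (PP s)
      rwa [PP_natDegree, hcard] at this
    have hcardroots : Multiset.card (derivative (PP s)).roots = (derivative (PP s)).natDegree :=
      (splits_iff_card_roots.1 (IsAlgClosed.splits _))
    have hroots : ∀ ρ ∈ (derivative (PP s)).roots, ρ.re < 0 := by
      intro ρ hρ
      by_contra hc
      push_neg at hc
      have hne' : ∀ a ∈ s, ρ + a ≠ 0 := by
        intro a ha h0
        have h2 : 0 < (ρ + a).re := by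
          rw [Complex.add_re]
          have := hs a ha
          linarith
        rw [h0, Complex.zero_re] at h2
        exact lt_irrefl 0 h2
      have heval : (derivative (PP s)).eval ρ = 0 := (Polynomial.mem_roots hq0).1 hρ
      rw [PP_deriv_eval s hne'] at heval
      have hWρ : 0 < ((s.map (fun a => (ρ + a)⁻¹)).sum).re := by
        apply sum_re_pos
        · simpa using hs0
        · intro z hz
          obtain ⟨a, ha, rfl⟩ := Multiset.mem_map.1 hz
          refine re_inv_pos ?_
          rw [Complex.add_re]
          have := hs a ha
          linarith
      have hsne : (s.map (fun a => (ρ + a)⁻¹)).sum ≠ 0 := by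
        intro h
        rw [h, Complex.zero_re] at hWρ
        exact lt_irrefl 0 hWρ
      exact mul_ne_zero (PP_eval_ne_zero s hne') hsne heval
    set u : Multiset ℂ := (derivative (PP s)).roots.map (fun ρ => -ρ) with hudef
    have hu_card : Multiset.card u = n - 1 := by
      rw [hudef, Multiset.card_map, hcardroots, hqdeg]
    have hu_re : ∀ b ∈ u, 0 < b.re := by
      intro b hb
      obtain ⟨ρ, hρ, rfl⟩ := Multiset.mem_map.1 hb
      have := hroots ρ hρ
      rw [Complex.neg_re]
      linarith
    have hq_lead : (derivative (PP s)).leadingCoeff = (n : ℂ) := by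
      rw [Polynomial.leadingCoeff, hqdeg, hqc]
    have haux : ∀ t : Multiset ℂ, (t.map (fun a => X - C a)).prod = PP (t.map (fun ρ => -ρ)) := by
      intro t
      rw [PP, Multiset.map_map]
      refine congrArg Multiset.prod (Multiset.map_congr rfl ?_)
      intro ρ _
      simp [sub_eq_add_neg]
    have hq_eq : derivative (PP s) = C (n : ℂ) * PP u := by
      conv_lhs => rw [← Polynomial.C_leadingCoeff_mul_prod_multiset_X_sub_C hcardroots]
      rw [hq_lead, haux ((derivative (PP s)).roots), ← hudef]
    have hcoeff : ∀ j, j ≤ n - 1 → ((n - j : ℕ) : ℂ) * s.esymm j = (n : ℂ) * u.esymm j := by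
      intro j hj
      have h1 : (derivative (PP s)).coeff (n - 1 - j)
          = (PP s).coeff (n - 1 - j + 1) * (((n - 1 - j : ℕ) : ℂ) + 1) := coeff_derivative _ _
      have h2 : (PP s).coeff (n - 1 - j + 1) = s.esymm j := by
        rw [PP_coeff s (by omega : n - 1 - j + 1 ≤ Multiset.card s), hcard]
        congr 1
        omega
      have h3 : (derivative (PP s)).coeff (n - 1 - j) = (n : ℂ) * u.esymm j := by
        rw [hq_eq, Polynomial.coeff_C_mul, PP_coeff u (by omega : n - 1 - j ≤ Multiset.card u), hu_card]
        congr 2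
        omega
      have h4 : (((n - 1 - j : ℕ) : ℂ) + 1) = ((n - j : ℕ) : ℂ) := by
        rw [show n - j = (n - 1 - j) + 1 from by omega]
        push_cast
        ring
      rw [h1, h2, h4] at h3
      rw [mul_comm]
      exact h3
    obtain ⟨hu1, hu2⟩ := IH (n - 1) (by omega) u hu_card hu_re r hr1 (by omega)
    have e1 := hcoeff (r - 1) (by omega)
    have e2 := hcoeff r (by omega)
    have hnr1 : ((n - (r - 1) : ℕ) : ℂ) ≠ 0 := Nat.cast_ne_zero.2 (by omega)
    have hnr : ((n - r : ℕ) : ℂ) ≠ 0 := Nat.cast_ne_zero.2 (by omega)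
    have hs1 : s.esymm (r - 1) ≠ 0 := by
      intro h0
      rw [h0, mul_zero] at e1
      rcases mul_eq_zero.1 e1.symm with h | h
      · exact hncast h
      · exact hu1 h
    refine ⟨hs1, ?_⟩
    have cross : s.esymm r * (((n - r : ℕ) : ℂ) * u.esymm (r - 1))
        = ((n - (r - 1) : ℕ) : ℂ) * u.esymm r * s.esymm (r - 1) := by
      linear_combination u.esymm (r - 1) * e2 - u.esymm r * e1
    have hration : s.esymm r / s.esymm (r - 1)
        = (((n - (r - 1) : ℕ) : ℂ) / ((n - r : ℕ) : ℂ)) * (u.esymm r / u.esymm (r - 1)) := by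
      rw [div_mul_div_comm, div_eq_div_iff hs1 (mul_ne_zero hnr hu1)]
      linear_combination cross
    have hc : (((n - (r - 1) : ℕ) : ℂ) / ((n - r : ℕ) : ℂ))
        = ((((n - (r - 1) : ℕ) : ℝ) / ((n - r : ℕ) : ℝ) : ℝ) : ℂ) := by
      push_cast
      ring
    rw [hration, hc, Complex.re_ofReal_mul]
    apply mul_pos _ hu2
    apply div_pos
    · exact_mod_cast Nat.pos_of_ne_zero (fun h => by rw [h] at hnr1; simp at hnr1)
    · exact_mod_cast Nat.pos_of_ne_zero (fun h => by rw [h] at hnr; simp at hnr)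

theorem stmt15 {n r : ℕ} (h1 : 1 ≤ r) (h2 : r ≤ n) (x : Fin n → ℂ)
    (hx : ∀ i, 0 < (x i).re) :
    0 < (MvPolynomial.eval x (MvPolynomial.esymm (Fin n) ℂ r) /
      MvPolynomial.eval x (MvPolynomial.esymm (Fin n) ℂ (r - 1))).re := by
  have heq : ∀ k : ℕ, MvPolynomial.eval x (MvPolynomial.esymm (Fin n) ℂ k)
      = (Finset.univ.val.map x).esymm k := by
    intro k
    rw [← MvPolynomial.coe_aeval_eq_eval]
    exact MvPolynomial.aeval_esymm_eq_multiset_esymm (σ := Fin n) ℂ (S := ℂ) k x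
  rw [heq, heq]
  have hcard : Multiset.card (Finset.univ.val.map x) = n := by simp
  have hmem : ∀ z ∈ Finset.univ.val.map x, 0 < z.re := by
    intro z hz
    obtain ⟨i, _, rfl⟩ := Multiset.mem_map.1 hz
    exact hx i
  exact (key n (Finset.univ.val.map x) hcard hmem r h1 h2).2
end

section
/- Fix 0 ≤ r ≤ n−1 and let H_{r,n}(q) = ∑_{ℓ=0}^{r} C(n−r−1+ℓ, ℓ) q^ℓ. Then all complex zeros of H_{r,n} lie in the annulus 1/(n−r) ≤ |q| ≤ r/(n−1). -/
/-!
The coefficients `a l = C(m + l, l)` (with `m = n - r - 1`) are positive and their successive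
ratios `a (l + 1) / a l = (m + l + 1) / (l + 1)` decrease from `m + 1 = n - r` at `l = 0` to
`(m + r) / r = (n - 1) / r` at `l = r - 1`. By the Eneström–Kakeya theorem every zero `q` of
`∑ a l q ^ l` then satisfies `min (a l / a (l + 1)) ≤ ‖q‖ ≤ max (a l / a (l + 1))`.

Eneström–Kakeya is proved in its basic form (nondecreasing coefficients force `‖z‖ ≤ 1`, by
multiplying with `z - 1` and comparing the top term with the rest), then rescaled by `z ↦ z / B`
for the upper bound and applied to the reversed polynomial, with zero `z⁻¹`, for the lower one.
-/

open Finset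

theorem mul_sub_one_sum_range_mul_pow {R : Type*} [CommRing R] (b : ℕ → R) (z : R) (r : ℕ) :
    (z - 1) * ∑ l ∈ range (r + 1), b l * z ^ l
      = b r * z ^ (r + 1) - b 0 - ∑ j ∈ range r, (b (j + 1) - b j) * z ^ (j + 1) := by
  induction r with
  | zero => rw [sum_range_one, sum_range_zero]; ring
  | succ r ih => rw [sum_range_succ, mul_add, ih, sum_range_succ]; ring

section EnestromKakeya

variable {r : ℕ} {z : ℂ}

theorem norm_le_one_of_sum_eq_zero_of_coeff_mono {b : ℕ → ℝ} (hb0 : 0 ≤ b 0) (hbr : 0 < b r)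
    (hmono : ∀ k < r, b k ≤ b (k + 1)) (hz : ∑ l ∈ range (r + 1), (b l : ℂ) * z ^ l = 0) :
    ‖z‖ ≤ 1 := by
  by_contra! hz1
  have hdiff : ∀ j ∈ range r, 0 ≤ b (j + 1) - b j :=
    fun j hj => sub_nonneg.2 (hmono j (mem_range.1 hj))
  have htop : (b r : ℂ) * z ^ (r + 1)
      = b 0 + ∑ j ∈ range r, ((b (j + 1) : ℂ) - b j) * z ^ (j + 1) := by
    linear_combination (z - 1) * hz - mul_sub_one_sum_range_mul_pow (fun l => (b l : ℂ)) z r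
  have hpow : b r * ‖z‖ ^ (r + 1) ≤ b r * ‖z‖ ^ r := calc
    b r * ‖z‖ ^ (r + 1) = ‖(b r : ℂ) * z ^ (r + 1)‖ := by
      rw [norm_mul, norm_pow, Complex.norm_real, Real.norm_of_nonneg hbr.le]
    _ ≤ b 0 + ∑ j ∈ range r, (b (j + 1) - b j) * ‖z‖ ^ (j + 1) := by
      rw [htop]
      refine (norm_add_le _ _).trans (add_le_add ?_ ?_)
      · rw [Complex.norm_real, Real.norm_of_nonneg hb0]
      · refine (norm_sum_le _ _).trans (sum_le_sum fun j hj => ?_)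
        rw [norm_mul, norm_pow, ← Complex.ofReal_sub, Complex.norm_real,
          Real.norm_of_nonneg (hdiff j hj)]
    _ ≤ b 0 * ‖z‖ ^ r + ∑ j ∈ range r, (b (j + 1) - b j) * ‖z‖ ^ r := by
      refine add_le_add (le_mul_of_one_le_right hb0 (one_le_pow₀ hz1.le))
        (sum_le_sum fun j hj => ?_)
      exact mul_le_mul_of_nonneg_left (pow_le_pow_right₀ hz1.le (mem_range.1 hj)) (hdiff j hj)
    _ = b r * ‖z‖ ^ r := by rw [← sum_mul, ← add_mul, sum_range_sub]; ring
  exact (pow_lt_pow_right₀ hz1 r.lt_succ_self).not_ge (le_of_mul_le_mul_left hpow hbr)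

theorem norm_le_of_sum_eq_zero_of_coeff_le_mul {a : ℕ → ℝ} {B : ℝ} (hB : 0 < B)
    (ha0 : 0 ≤ a 0) (har : 0 < a r) (hratio : ∀ k < r, a k ≤ B * a (k + 1))
    (hz : ∑ l ∈ range (r + 1), (a l : ℂ) * z ^ l = 0) : ‖z‖ ≤ B := by
  have hB' : (B : ℂ) ≠ 0 := by exact_mod_cast hB.ne'
  have hscaled : ∑ l ∈ range (r + 1), ((a l * B ^ l : ℝ) : ℂ) * (z / B) ^ l = 0 := by
    rw [← hz]
    refine sum_congr rfl fun l _ => ?_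
    rw [Complex.ofReal_mul, Complex.ofReal_pow, div_pow, mul_assoc,
      mul_div_cancel₀ _ (pow_ne_zero l hB')]
  have h := norm_le_one_of_sum_eq_zero_of_coeff_mono (b := fun l => a l * B ^ l)
    (by simpa using ha0) (mul_pos har (pow_pos hB r))
    (fun k hk => by
      rw [pow_succ, ← mul_assoc, mul_comm _ B, ← mul_assoc]
      exact mul_le_mul_of_nonneg_right (hratio k hk) (pow_nonneg hB.le k))
    hscaled
  rwa [norm_div, Complex.norm_real, Real.norm_of_nonneg hB.le, div_le_one hB] at h

theorem inv_le_norm_of_sum_eq_zero_of_coeff_succ_le_mul {a : ℕ → ℝ} {B : ℝ} (hB : 0 < B)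
    (ha0 : 0 < a 0) (har : 0 ≤ a r) (hratio : ∀ k < r, a (k + 1) ≤ B * a k)
    (hz : ∑ l ∈ range (r + 1), (a l : ℂ) * z ^ l = 0) : B⁻¹ ≤ ‖z‖ := by
  have hz0 : z ≠ 0 := by
    rintro rfl
    rw [sum_range_succ'] at hz
    simp [ha0.ne'] at hz
  have hrev : ∑ j ∈ range (r + 1), (a (r - j) : ℂ) * z⁻¹ ^ j = 0 := by
    have hmul : z ^ r * ∑ j ∈ range (r + 1), (a (r - j) : ℂ) * z⁻¹ ^ j
        = ∑ l ∈ range (r + 1), (a l : ℂ) * z ^ l := by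
      rw [mul_sum, ← sum_range_reflect]
      refine sum_congr rfl fun j hj => ?_
      have hjr : j ≤ r := Nat.lt_succ_iff.1 (mem_range.1 hj)
      rw [Nat.add_sub_cancel, inv_pow, mul_left_comm, ← pow_sub₀ z hz0 (Nat.sub_le r j),
        Nat.sub_sub_self hjr]
    simpa [hz, hz0] using hmul
  have h := norm_le_of_sum_eq_zero_of_coeff_le_mul (a := fun j => a (r - j)) hB
    (by simpa using har) (by simpa using ha0)
    (fun k hk => by
      have hk' : r - k = r - (k + 1) + 1 := by omega
      simpa only [hk'] using hratio (r - (k + 1)) (by omega))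
    hrev
  rwa [norm_inv, inv_le_comm₀ (norm_pos_iff.2 hz0) hB] at h

end EnestromKakeya

theorem choose_succ_le_mul_choose (m j : ℕ) :
    (m + j + 1).choose (j + 1) ≤ (m + 1) * (m + j).choose j := by
  refine Nat.le_of_mul_le_mul_right ?_ j.succ_pos
  calc (m + j + 1).choose (j + 1) * (j + 1) = (m + j + 1) * (m + j).choose j :=
      (Nat.add_one_mul_choose_eq _ _).symm
    _ ≤ (m + 1) * (j + 1) * (m + j).choose j := by gcongr; nlinarith
    _ = (m + 1) * (m + j).choose j * (j + 1) := by ring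

theorem choose_mul_le_mul_choose_succ {m r k : ℕ} (hk : k < r) :
    (m + k).choose k * (m + r) ≤ r * (m + k + 1).choose (k + 1) := by
  refine Nat.le_of_mul_le_mul_right ?_ k.succ_pos
  calc (m + k).choose k * (m + r) * (k + 1) = (k + 1) * (m + r) * (m + k).choose k := by ring
    _ ≤ r * (m + k + 1) * (m + k).choose k := Nat.mul_le_mul_right _ (by nlinarith)
    _ = r * (m + k + 1).choose (k + 1) * (k + 1) := by
      rw [mul_assoc, Nat.add_one_mul_choose_eq, mul_assoc]

theorem stmt16 {n r : ℕ} (h : r < n) (q : ℂ)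
    (hq : ∑ l ∈ Finset.range (r + 1), ((n - r - 1 + l).choose l : ℂ) * q ^ l = 0) :
    1 / ((n : ℝ) - r) ≤ ‖q‖ ∧ ‖q‖ ≤ (r : ℝ) / ((n : ℝ) - 1) := by
  obtain ⟨m, rfl⟩ : ∃ m, n = m + r + 1 := ⟨n - r - 1, by omega⟩
  obtain rfl | hr := Nat.eq_zero_or_pos r
  · simp at hq
  set a : ℕ → ℝ := fun l => ((m + l).choose l : ℝ)
  have hpos : ∀ l, 0 < a l := fun l => Nat.cast_pos.2 (Nat.choose_pos (Nat.le_add_left l m))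
  have hm : m + r + 1 - r - 1 = m := by omega
  have hroot : ∑ l ∈ range (r + 1), (a l : ℂ) * q ^ l = 0 := by simpa [a, hm] using hq
  have hnr : ((m + r + 1 : ℕ) : ℝ) - r = m + 1 := by push_cast; ring
  have hn1 : ((m + r + 1 : ℕ) : ℝ) - 1 = m + r := by push_cast; ring
  rw [hnr, hn1, one_div]
  constructor
  · refine inv_le_norm_of_sum_eq_zero_of_coeff_succ_le_mul (by positivity) (hpos 0) (hpos r).le
      (fun k _ => ?_) hroot
    simp only [a, ← add_assoc]
    exact_mod_cast choose_succ_le_mul_choose m k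
  · refine norm_le_of_sum_eq_zero_of_coeff_le_mul (by positivity) (hpos 0).le (hpos r)
      (fun k hk => ?_) hroot
    rw [div_mul_eq_mul_div, le_div_iff₀ (by positivity)]
    simp only [a, ← add_assoc]
    exact_mod_cast choose_mul_le_mul_choose_succ hk
end

section
/- Let G = (V,E) be a finite loopless graph with nonnegative edge weights λ_e, and for x ∈ ℂ^V define the reverse matching polynomial M̃_G(x;λ) = ∑_{matchings M} (∏_{e=ij∈M} λ_e)·(∏_{v∉V(M)} x_v). If Re(x_v) > 0 for all v ∈ V, then M̃_G(x;λ) ≠ 0, and moreover Re(M̃_G(x;λ)/M̃_{G−v}(x;λ)) > 0 for every vertex v. -/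
open Classical

noncomputable def matchPolyComp {V : Type} [Fintype V] [DecidableEq V]
    (G : SimpleGraph V) (U : Finset V) (lam : Sym2 V → ℝ) (x : V → ℂ) : ℂ :=
  ∑ M ∈ Finset.univ.filter (fun M : Finset (Sym2 V) =>
      (↑M : Set (Sym2 V)) ⊆ G.edgeSet ∧
      (∀ e ∈ M, ∀ v, v ∈ e → v ∈ U) ∧
      (↑M : Set (Sym2 V)).Pairwise fun e f => ∀ v, ¬(v ∈ e ∧ v ∈ f)),
    (∏ e ∈ M, (lam e : ℂ)) * ∏ v ∈ U.filter (fun v => ∀ e ∈ M, v ∉ e), x v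

namespace HLaux

variable {V : Type} [Fintype V] [DecidableEq V]

def Pm (G : SimpleGraph V) (U : Finset V) (M : Finset (Sym2 V)) : Prop :=
  (↑M : Set (Sym2 V)) ⊆ G.edgeSet ∧
  (∀ e ∈ M, ∀ v, v ∈ e → v ∈ U) ∧
  (↑M : Set (Sym2 V)).Pairwise fun e f => ∀ v, ¬(v ∈ e ∧ v ∈ f)

lemma mpc_def (G : SimpleGraph V) (U : Finset V) (lam : Sym2 V → ℝ) (x : V → ℂ) :
    matchPolyComp G U lam x = ∑ M ∈ Finset.univ.filter (Pm G U),
      (∏ e ∈ M, (lam e : ℂ)) * ∏ v ∈ U.filter (fun v => ∀ e ∈ M, v ∉ e), x v := by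
  unfold matchPolyComp Pm
  congr 1
  congr 1

lemma recursion (G : SimpleGraph V) (lam : Sym2 V → ℝ) (x : V → ℂ)
    {U : Finset V} {v : V} (hv : v ∈ U) :
    matchPolyComp G U lam x = x v * matchPolyComp G (U.erase v) lam x +
      ∑ u ∈ (U.erase v).filter (fun u => G.Adj v u),
        (lam s(v, u) : ℂ) * matchPolyComp G ((U.erase v).erase u) lam x := by
  classical
  have hsplit := Finset.sum_filter_add_sum_filter_not (Finset.univ.filter (Pm G U))
    (fun M => ∀ e ∈ M, v ∉ e)
    (fun M => (∏ e ∈ M, (lam e : ℂ)) * ∏ w ∈ U.filter (fun w => ∀ e ∈ M, w ∉ e), x w)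
  rw [mpc_def, ← hsplit]
  congr 1
  · -- uncovered part
    have hset1 : (Finset.univ.filter (Pm G U)).filter (fun M => ∀ e ∈ M, v ∉ e)
        = Finset.univ.filter (Pm G (U.erase v)) := by
      ext M
      simp only [Finset.mem_filter, Finset.mem_univ, true_and]
      constructor
      · rintro ⟨⟨h1, h2, h3⟩, h4⟩
        refine ⟨h1, fun e he w hw => Finset.mem_erase.2 ⟨?_, h2 e he w hw⟩, h3⟩
        rintro rfl; exact h4 e he hw
      · rintro ⟨h1, h2, h3⟩
        exact ⟨⟨h1, fun e he w hw => Finset.mem_of_mem_erase (h2 e he w hw), h3⟩,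
          fun e he hv' => (Finset.mem_erase.1 (h2 e he v hv')).1 rfl⟩
    rw [hset1, mpc_def, Finset.mul_sum]
    apply Finset.sum_congr rfl
    intro M hM
    simp only [Finset.mem_filter, Finset.mem_univ, true_and] at hM
    obtain ⟨h1, h2, h3⟩ := hM
    have hvunc : v ∈ U.filter (fun w => ∀ e ∈ M, w ∉ e) := by
      simp only [Finset.mem_filter]
      exact ⟨hv, fun e he hv' => (Finset.mem_erase.1 (h2 e he v hv')).1 rfl⟩
    have hprod : (∏ w ∈ U.filter (fun w => ∀ e ∈ M, w ∉ e), x w)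
        = x v * ∏ w ∈ (U.erase v).filter (fun w => ∀ e ∈ M, w ∉ e), x w := by
      rw [Finset.filter_erase, ← Finset.mul_prod_erase _ _ hvunc]
    rw [hprod]; ring
  · -- covered part
    have hcover : (Finset.univ.filter (Pm G U)).filter (fun M => ¬ ∀ e ∈ M, v ∉ e)
        = ((U.erase v).filter (fun u => G.Adj v u)).biUnion
            (fun u => (Finset.univ.filter (Pm G U)).filter (fun M => s(v, u) ∈ M)) := by
      ext M
      simp only [Finset.mem_biUnion, Finset.mem_filter, Finset.mem_univ, true_and]
      constructor
      · rintro ⟨hPm, hcov⟩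
        push_neg at hcov
        obtain ⟨e, he, hve⟩ := hcov
        obtain ⟨u, rfl⟩ := Sym2.mem_iff_exists.1 hve
        have hadj : G.Adj v u := G.mem_edgeSet.1 (hPm.1 he)
        exact ⟨u, ⟨Finset.mem_erase.2 ⟨hadj.ne', hPm.2.1 _ he u (Sym2.mem_mk_right v u)⟩,
          hadj⟩, hPm, he⟩
      · rintro ⟨u, ⟨hu, hadj⟩, hPm, he⟩
        refine ⟨hPm, fun h => h _ he (Sym2.mem_mk_left v u)⟩
    have hdisj : (↑((U.erase v).filter (fun u => G.Adj v u)) : Set V).PairwiseDisjoint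
        (fun u => (Finset.univ.filter (Pm G U)).filter (fun M => s(v, u) ∈ M)) := by
      intro u1 _ u2 _ hne
      rw [Function.onFun, Finset.disjoint_left]
      intro M hM1 hM2
      simp only [Finset.mem_filter, Finset.mem_univ, true_and] at hM1 hM2
      have hEdne : s(v, u1) ≠ s(v, u2) := fun h => hne (Sym2.congr_right.1 h)
      exact hM1.1.2.2 (Finset.mem_coe.2 hM1.2) (Finset.mem_coe.2 hM2.2) hEdne v
        ⟨Sym2.mem_mk_left v u1, Sym2.mem_mk_left v u2⟩
    rw [hcover, Finset.sum_biUnion hdisj]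
    apply Finset.sum_congr rfl
    intro u hu
    simp only [Finset.mem_filter, Finset.mem_erase] at hu
    obtain ⟨⟨huv, huU⟩, hadj⟩ := hu
    rw [mpc_def, Finset.mul_sum]
    apply Finset.sum_nbij' (i := fun M => M.erase s(v, u)) (j := fun M' => insert s(v, u) M')
    · -- hi
      intro M hM
      simp only [Finset.mem_filter, Finset.mem_univ, true_and] at hM ⊢
      obtain ⟨⟨h1, h2, h3⟩, he⟩ := hM
      refine ⟨?_, ?_, ?_⟩
      · intro e he'
        exact h1 (Finset.mem_coe.2 (Finset.mem_of_mem_erase (Finset.mem_coe.1 he')))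
      · intro e he' w hw
        have heM : e ∈ M := Finset.mem_of_mem_erase he'
        have hene : e ≠ s(v, u) := (Finset.mem_erase.1 he').1
        have hpair := h3 (Finset.mem_coe.2 heM) (Finset.mem_coe.2 he) hene w
        refine Finset.mem_erase.2 ⟨?_, Finset.mem_erase.2 ⟨?_, h2 e heM w hw⟩⟩
        · rintro rfl; exact hpair ⟨hw, Sym2.mem_mk_right _ _⟩
        · rintro rfl; exact hpair ⟨hw, Sym2.mem_mk_left _ _⟩
      · exact h3.mono (Finset.coe_subset.2 (Finset.erase_subset _ _))
    · -- hj
      intro M' hM'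
      simp only [Finset.mem_filter, Finset.mem_univ, true_and] at hM' ⊢
      obtain ⟨h1, h2, h3⟩ := hM'
      have hnotin : s(v, u) ∉ M' := fun h =>
        (Finset.mem_erase.1 (Finset.mem_of_mem_erase (h2 _ h v (Sym2.mem_mk_left v u)))).1 rfl
      refine ⟨⟨?_, ?_, ?_⟩, Finset.mem_insert_self _ _⟩
      · intro e he
        rw [Finset.coe_insert, Set.mem_insert_iff] at he
        rcases he with rfl | he
        · exact G.mem_edgeSet.2 hadj
        · exact h1 he
      · intro e he w hw
        rcases Finset.mem_insert.1 he with rfl | he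
        · rcases Sym2.mem_iff.1 hw with rfl | rfl
          · exact hv
          · exact huU
        · exact Finset.mem_of_mem_erase (Finset.mem_of_mem_erase (h2 e he w hw))
      · rw [Finset.coe_insert]
        intro a ha b hb hab w hw
        rcases Set.mem_insert_iff.1 ha with rfl | ha <;>
          rcases Set.mem_insert_iff.1 hb with rfl | hb
        · exact hab rfl
        · have hwb := h2 b (Finset.mem_coe.1 hb) w hw.2
          rcases Sym2.mem_iff.1 hw.1 with rfl | rfl
          · exact (Finset.mem_erase.1 (Finset.mem_of_mem_erase hwb)).1 rfl
          · exact (Finset.mem_erase.1 hwb).1 rfl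
        · have hwa := h2 a (Finset.mem_coe.1 ha) w hw.1
          rcases Sym2.mem_iff.1 hw.2 with rfl | rfl
          · exact (Finset.mem_erase.1 (Finset.mem_of_mem_erase hwa)).1 rfl
          · exact (Finset.mem_erase.1 hwa).1 rfl
        · exact h3 ha hb hab w hw
    · -- left inverse
      intro M hM
      simp only [Finset.mem_filter] at hM
      exact Finset.insert_erase hM.2
    · -- right inverse
      intro M' hM'
      simp only [Finset.mem_filter, Finset.mem_univ, true_and] at hM'
      have hnotin : s(v, u) ∉ M' := fun h =>
        (Finset.mem_erase.1 (Finset.mem_of_mem_erase (hM'.2.1 _ h v (Sym2.mem_mk_left v u)))).1 rfl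
      exact Finset.erase_insert hnotin
    · -- values
      intro M hM
      simp only [Finset.mem_filter, Finset.mem_univ, true_and] at hM
      obtain ⟨⟨h1, h2, h3⟩, he⟩ := hM
      have hlprod : (∏ e ∈ M, (lam e : ℂ))
          = (lam s(v, u) : ℂ) * ∏ e ∈ M.erase s(v, u), (lam e : ℂ) :=
        (Finset.mul_prod_erase _ _ he).symm
      have hsets : U.filter (fun w => ∀ e ∈ M, w ∉ e)
          = ((U.erase v).erase u).filter (fun w => ∀ e ∈ M.erase s(v, u), w ∉ e) := by
        ext w
        simp only [Finset.mem_filter, Finset.mem_erase]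
        constructor
        · rintro ⟨hwU, hall⟩
          have hwe : w ∉ s(v, u) := hall _ he
          refine ⟨⟨?_, ?_, hwU⟩, fun e he' => hall e he'.2⟩
          · rintro rfl; exact hwe (Sym2.mem_mk_right _ _)
          · rintro rfl; exact hwe (Sym2.mem_mk_left _ _)
        · rintro ⟨⟨hwu, hwv, hwU⟩, hall⟩
          refine ⟨hwU, fun e he' => ?_⟩
          by_cases heq : e = s(v, u)
          · subst heq
            intro hmem
            rcases Sym2.mem_iff.1 hmem with rfl | rfl
            · exact hwv rfl
            · exact hwu rfl
          · exact hall e ⟨heq, he'⟩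
      rw [hlprod, hsets]; ring

lemma mpc_empty (G : SimpleGraph V) (lam : Sym2 V → ℝ) (x : V → ℂ) :
    matchPolyComp G (∅ : Finset V) lam x = 1 := by
  rw [mpc_def]
  have hset : Finset.univ.filter (Pm G (∅ : Finset V)) = {∅} := by
    ext M
    simp only [Finset.mem_filter, Finset.mem_univ, true_and, Finset.mem_singleton]
    constructor
    · rintro ⟨-, h2, -⟩
      ext e
      simp only [Finset.notMem_empty, iff_false]
      intro he
      induction e using Sym2.inductionOn with
      | hf a b => exact absurd (h2 _ he a (Sym2.mem_mk_left a b)) (Finset.notMem_empty a)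
    · rintro rfl
      refine ⟨by simp, by simp, by simp⟩
  rw [hset]
  simp

lemma main (G : SimpleGraph V) (lam : Sym2 V → ℝ) (hlam : ∀ e ∈ G.edgeSet, 0 ≤ lam e)
    (x : V → ℂ) (hx : ∀ v, 0 < (x v).re) (U : Finset V) :
    matchPolyComp G U lam x ≠ 0 ∧
      ∀ v ∈ U, 0 < (matchPolyComp G U lam x / matchPolyComp G (U.erase v) lam x).re := by
  induction U using Finset.strongInduction with
  | _ U ih =>
  have key : ∀ v ∈ U,
      0 < (matchPolyComp G U lam x / matchPolyComp G (U.erase v) lam x).re := by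
    intro v hv
    obtain ⟨hne', hratio'⟩ := ih (U.erase v) (Finset.erase_ssubset hv)
    rw [recursion G lam x hv, add_div, mul_div_assoc, div_self hne', mul_one,
      Finset.sum_div, Complex.add_re]
    have hsum : 0 ≤ (∑ u ∈ (U.erase v).filter (fun u => G.Adj v u),
        (lam s(v, u) : ℂ) * matchPolyComp G ((U.erase v).erase u) lam x /
          matchPolyComp G (U.erase v) lam x).re := by
      rw [Complex.re_sum]
      apply Finset.sum_nonneg
      intro u hu
      simp only [Finset.mem_filter] at hu
      obtain ⟨hu1, hadj⟩ := hu
      have hz := hratio' u hu1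
      have heq : (lam s(v, u) : ℂ) * matchPolyComp G ((U.erase v).erase u) lam x /
          matchPolyComp G (U.erase v) lam x =
          (lam s(v, u) : ℂ) * (matchPolyComp G (U.erase v) lam x /
            matchPolyComp G ((U.erase v).erase u) lam x)⁻¹ := by
        rw [inv_div, mul_div_assoc]
      rw [heq, Complex.re_ofReal_mul]
      apply mul_nonneg (hlam _ (G.mem_edgeSet.2 hadj))
      rw [Complex.inv_re]
      exact div_nonneg hz.le (Complex.normSq_nonneg _)
    linarith [hx v, hsum]
  refine ⟨?_, key⟩
  rcases U.eq_empty_or_nonempty with rfl | ⟨v, hv⟩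
  · rw [mpc_empty]; exact one_ne_zero
  · intro h0
    have := key v hv
    rw [h0, zero_div] at this
    simp at this

end HLaux

theorem stmt17 {V : Type} [Fintype V] [DecidableEq V]
    (G : SimpleGraph V) (lam : Sym2 V → ℝ) (hlam : ∀ e ∈ G.edgeSet, 0 ≤ lam e)
    (x : V → ℂ) (hx : ∀ v, 0 < (x v).re) :
    matchPolyComp G Finset.univ lam x ≠ 0 ∧
      ∀ v : V, 0 < (matchPolyComp G Finset.univ lam x /
        matchPolyComp G (Finset.univ.erase v) lam x).re := by
  obtain ⟨h1, h2⟩ := HLaux.main G lam hlam x hx Finset.univ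
  exact ⟨h1, fun v => h2 v (Finset.mem_univ v)⟩
end

section
/- Let G = (V,E) be a finite loopless graph with nonnegative edge weights λ_e, and define the matching generating polynomial M_G(x;λ) = ∑_{matchings M} ∏_{e=ij∈M} λ_e x_i x_j. Then M_G(x;λ) ≠ 0 whenever Re(x_v) > 0 for all v ∈ V. -/
open Classical

namespace Stmt18

variable {V : Type} [Fintype V] [DecidableEq V]

/-- edge weight -/
noncomputable def Q (lam : Sym2 V → ℝ) (x : V → ℂ) (e : Sym2 V) : ℂ :=
  (lam e : ℂ) * Sym2.lift ⟨fun i j => x i * x j, fun _ _ => mul_comm _ _⟩ e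

/-- matchings of the subgraph induced on `S` -/
def pred (G : SimpleGraph V) (S : Finset V) (M : Finset (Sym2 V)) : Prop :=
  (↑M : Set (Sym2 V)) ⊆ G.edgeSet ∧ (∀ e ∈ M, ∀ w ∈ e, w ∈ S) ∧
    (↑M : Set (Sym2 V)).Pairwise fun e f => ∀ w, ¬(w ∈ e ∧ w ∈ f)

noncomputable def P (G : SimpleGraph V) (lam : Sym2 V → ℝ) (x : V → ℂ) (S : Finset V) : ℂ :=
  ∑ M ∈ Finset.univ.filter (pred G S), ∏ e ∈ M, Q lam x e

lemma P_empty (G : SimpleGraph V) (lam : Sym2 V → ℝ) (x : V → ℂ) :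
    P G lam x ∅ = 1 := by
  have h : Finset.univ.filter (pred G (∅ : Finset V)) = {(∅ : Finset (Sym2 V))} := by
    ext M
    simp only [Finset.mem_filter, Finset.mem_univ, true_and, Finset.mem_singleton]
    constructor
    · rintro ⟨-, h2, -⟩
      by_contra hM
      obtain ⟨e, he⟩ := Finset.nonempty_iff_ne_empty.2 hM
      induction e using Sym2.ind with
      | _ a b => exact absurd (h2 _ he a (Sym2.mem_mk_left a b)) (Finset.notMem_empty a)
    · rintro rfl
      refine ⟨by simp, by simp, by simp⟩
  rw [P, h, Finset.sum_singleton, Finset.prod_empty]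

lemma exists_unique_nbr (G : SimpleGraph V) (S : Finset V) (v : V) (M : Finset (Sym2 V))
    (hM : pred G S M) (hc : ¬ ∀ e ∈ M, v ∉ e) :
    ∃! u, u ∈ S.erase v ∧ s(u, v) ∈ M := by
  push_neg at hc
  obtain ⟨e, heM, hve⟩ := hc
  obtain ⟨u, rfl⟩ := Sym2.mem_iff_exists.1 hve
  have hedge : s(v, u) ∈ G.edgeSet := hM.1 heM
  have hne : u ≠ v := by
    intro h
    exact G.not_isDiag_of_mem_edgeSet hedge (Sym2.mk_isDiag_iff.2 h.symm)
  have huS : u ∈ S := hM.2.1 _ heM u (Sym2.mem_mk_right v u)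
  have hswap : s(u, v) = s(v, u) := Sym2.eq_swap
  refine ⟨u, ⟨Finset.mem_erase.2 ⟨hne, huS⟩, hswap ▸ heM⟩, ?_⟩
  rintro u' ⟨hu'S, hu'M⟩
  by_contra hne'
  have hneq : s(u', v) ≠ s(u, v) := by
    intro h
    rcases Sym2.eq_iff.1 h with ⟨h1, -⟩ | ⟨h1, h2⟩
    · exact hne' h1
    · exact (Finset.mem_erase.1 hu'S).1 h1
  exact hM.2.2 (Finset.mem_coe.2 hu'M) (Finset.mem_coe.2 (hswap ▸ heM)) hneq v
    ⟨Sym2.mem_mk_right u' v, Sym2.mem_mk_right u v⟩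

lemma P_rec (G : SimpleGraph V) (lam : Sym2 V → ℝ) (x : V → ℂ)
    (S : Finset V) (v : V) (hv : v ∈ S) :
    P G lam x S = P G lam x (S.erase v) +
      ∑ u ∈ S.erase v, (if s(u, v) ∈ G.edgeSet then Q lam x s(u, v) else 0) *
        P G lam x ((S.erase v).erase u) := by
  classical
  have hsplit := Finset.sum_filter_add_sum_filter_not
      (Finset.univ.filter (pred G S)) (fun M => ∀ e ∈ M, v ∉ e)
      (fun M => ∏ e ∈ M, Q lam x e)
  rw [Finset.filter_filter, Finset.filter_filter] at hsplit
  rw [P, ← hsplit]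
  congr 1
  -- uncovered part
  · have hfeq : (Finset.univ.filter fun M => pred G S M ∧ ∀ e ∈ M, v ∉ e) =
        Finset.univ.filter (pred G (S.erase v)) := by
      ext M
      simp only [Finset.mem_filter, Finset.mem_univ, true_and]
      constructor
      · rintro ⟨⟨h1, h2, h3⟩, h4⟩
        exact ⟨h1, fun e he w hw =>
          Finset.mem_erase.2 ⟨fun hwv => h4 e he (hwv ▸ hw), h2 e he w hw⟩, h3⟩
      · rintro ⟨h1, h2, h3⟩
        refine ⟨⟨h1, fun e he w hw => (Finset.mem_erase.1 (h2 e he w hw)).2, h3⟩,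
          fun e he hve => (Finset.mem_erase.1 (h2 e he v hve)).1 rfl⟩
    rw [hfeq, P]
  -- covered part
  · have hstep : ∀ M ∈ (Finset.univ.filter fun M => pred G S M ∧ ¬∀ e ∈ M, v ∉ e),
        (∏ e ∈ M, Q lam x e) =
          ∑ u ∈ S.erase v, if s(u, v) ∈ M then ∏ e ∈ M, Q lam x e else 0 := by
      intro M hM
      rw [Finset.mem_filter] at hM
      obtain ⟨u₀, ⟨hu₀S, hu₀M⟩, huniq⟩ := exists_unique_nbr G S v M hM.2.1 hM.2.2
      rw [Finset.sum_eq_single_of_mem u₀ hu₀S]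
      · rw [if_pos hu₀M]
      · intro b hb hbne
        rw [if_neg]
        intro hbM
        exact hbne (huniq b ⟨hb, hbM⟩)
    rw [Finset.sum_congr rfl hstep, Finset.sum_comm]
    apply Finset.sum_congr rfl
    intro u hu
    rw [← Finset.sum_filter, Finset.filter_filter]
    have hfeq : (Finset.univ.filter fun M => (pred G S M ∧ ¬∀ e ∈ M, v ∉ e) ∧ s(u, v) ∈ M) =
        Finset.univ.filter (fun M => pred G S M ∧ s(u, v) ∈ M) := by
      ext M
      simp only [Finset.mem_filter, Finset.mem_univ, true_and]
      constructor
      · rintro ⟨⟨h1, -⟩, h2⟩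
        exact ⟨h1, h2⟩
      · rintro ⟨h1, h2⟩
        refine ⟨⟨h1, fun hall => hall _ h2 (Sym2.mem_mk_right u v)⟩, h2⟩
    rw [hfeq]
    by_cases hedge : s(u, v) ∈ G.edgeSet
    · rw [if_pos hedge, P, Finset.mul_sum]
      have huv : u ∈ S := (Finset.mem_erase.1 hu).2
      have hunev : u ≠ v := (Finset.mem_erase.1 hu).1
      refine Finset.sum_nbij' (fun M => M.erase s(u, v)) (fun M => insert s(u, v) M)
        ?_ ?_ ?_ ?_ ?_
      · -- forward map lands in target
        intro M hM
        rw [Finset.mem_filter] at hM ⊢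
        obtain ⟨-, ⟨h1, h2, h3⟩, hmem⟩ := hM
        refine ⟨Finset.mem_univ _, ?_, ?_, ?_⟩
        · intro e he
          exact h1 (Finset.mem_coe.2 (Finset.mem_of_mem_erase (Finset.mem_coe.1 he)))
        · intro e he w hw
          have heM : e ∈ M := Finset.mem_of_mem_erase he
          have hene : e ≠ s(u, v) := Finset.ne_of_mem_erase he
          have hdisj := h3 (Finset.mem_coe.2 heM) (Finset.mem_coe.2 hmem) hene w
          have hwS : w ∈ S := h2 e heM w hw
          refine Finset.mem_erase.2 ⟨?_, Finset.mem_erase.2 ⟨?_, hwS⟩⟩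
          · intro hwu
            exact hdisj ⟨hw, hwu ▸ Sym2.mem_mk_left u v⟩
          · intro hwv
            exact hdisj ⟨hw, hwv ▸ Sym2.mem_mk_right u v⟩
        · exact h3.mono (by exact_mod_cast Finset.erase_subset _ _)
      · -- backward map lands in source
        intro M hM
        rw [Finset.mem_filter] at hM ⊢
        obtain ⟨-, h1, h2, h3⟩ := hM
        have havoid : ∀ e ∈ M, ∀ w ∈ e, w ≠ u ∧ w ≠ v := by
          intro e he w hw
          have := Finset.mem_erase.1 (h2 e he w hw)
          exact ⟨this.1, (Finset.mem_erase.1 this.2).1⟩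
        have hnotin : s(u, v) ∉ M := by
          intro h
          exact (havoid _ h u (Sym2.mem_mk_left u v)).1 rfl
        refine ⟨Finset.mem_univ _, ⟨?_, ?_, ?_⟩, Finset.mem_insert_self _ _⟩
        · intro e he
          rcases Finset.mem_insert.1 (Finset.mem_coe.1 he) with rfl | heM
          · exact hedge
          · exact h1 (Finset.mem_coe.2 heM)
        · intro e he w hw
          rcases Finset.mem_insert.1 he with rfl | heM
          · rcases Sym2.mem_iff.1 hw with rfl | rfl
            · exact huv
            · exact hv
          · exact (Finset.mem_erase.1 (Finset.mem_erase.1 (h2 e heM w hw)).2).2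
        · rw [Finset.coe_insert]
          refine Set.Pairwise.insert h3 ?_
          intro e he hne
          have hkey : ∀ w, ¬(w ∈ s(u, v) ∧ w ∈ e) := by
            rintro w ⟨hw1, hw2⟩
            rcases Sym2.mem_iff.1 hw1 with rfl | rfl
            · exact (havoid _ (Finset.mem_coe.1 he) _ hw2).1 rfl
            · exact (havoid _ (Finset.mem_coe.1 he) _ hw2).2 rfl
          exact ⟨hkey, fun w ⟨hw1, hw2⟩ => hkey w ⟨hw2, hw1⟩⟩
      · -- left inverse
        intro M hM
        rw [Finset.mem_filter] at hM
        exact Finset.insert_erase hM.2.2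
      · -- right inverse
        intro M hM
        rw [Finset.mem_filter] at hM
        apply Finset.erase_insert
        intro h
        have := hM.2.2.1 _ h u (Sym2.mem_mk_left u v)
        exact (Finset.mem_erase.1 this).1 rfl
      · -- products match
        intro M hM
        rw [Finset.mem_filter] at hM
        exact (Finset.mul_prod_erase M _ hM.2.2).symm
    · rw [if_neg hedge, zero_mul]
      apply Finset.sum_eq_zero
      intro M hM
      rw [Finset.mem_filter] at hM
      exact absurd (hM.2.1.1 (Finset.mem_coe.2 hM.2.2)) hedge



lemma key (G : SimpleGraph V) (lam : Sym2 V → ℝ) (hlam : ∀ e ∈ G.edgeSet, 0 ≤ lam e)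
    (x : V → ℂ) (hx : ∀ v, 0 < (x v).re) :
    ∀ (n : ℕ) (S : Finset V), S.card ≤ n →
      P G lam x S ≠ 0 ∧
        ∀ v ∈ S, 0 < (P G lam x S / (x v * P G lam x (S.erase v))).re := by
  intro n
  induction n with
  | zero =>
    intro S hS
    have hSe : S = ∅ := Finset.card_eq_zero.1 (Nat.le_zero.1 hS)
    subst hSe
    exact ⟨by rw [P_empty]; exact one_ne_zero,
      fun v hv => absurd hv (Finset.notMem_empty v)⟩
  | succ n ih =>
    intro S hS
    have hrat : ∀ v ∈ S, 0 < (P G lam x S / (x v * P G lam x (S.erase v))).re := by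
      intro v hv
      have hSv : (S.erase v).card ≤ n := by
        have := Finset.card_erase_of_mem hv
        have := Finset.card_pos.2 ⟨v, hv⟩
        omega
      have ihSv := ih (S.erase v) hSv
      have hPSv := ihSv.1
      have hxv : x v ≠ 0 := by
        intro h
        have := hx v
        rw [h] at this
        simp at this
      rw [P_rec G lam x S v hv, add_div, Finset.sum_div, Complex.add_re, Complex.re_sum]
      have h1 : P G lam x (S.erase v) / (x v * P G lam x (S.erase v)) = (x v)⁻¹ := by
        rw [mul_comm, ← div_div, div_self hPSv, one_div]
      rw [h1]
      have h2 : 0 < ((x v)⁻¹).re := by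
        rw [Complex.inv_re]
        exact div_pos (hx v) (Complex.normSq_pos.2 hxv)
      have h3 : ∀ u ∈ S.erase v,
          0 ≤ ((if s(u, v) ∈ G.edgeSet then Q lam x s(u, v) else 0) *
            P G lam x ((S.erase v).erase u) / (x v * P G lam x (S.erase v))).re := by
        intro u hu
        by_cases hedge : s(u, v) ∈ G.edgeSet
        · rw [if_pos hedge]
          have hw := ihSv.2 u hu
          set w := P G lam x (S.erase v) / (x u * P G lam x ((S.erase v).erase u)) with hwdef
          have hterm : Q lam x s(u, v) * P G lam x ((S.erase v).erase u) /
              (x v * P G lam x (S.erase v)) = (lam s(u, v) : ℂ) * w⁻¹ := by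
            rw [hwdef, inv_div, Q, Sym2.lift_mk]
            field_simp
          rw [hterm, Complex.re_ofReal_mul]
          have hwne : w ≠ 0 := by
            intro h
            rw [h] at hw
            simp at hw
          have hinv : 0 < w⁻¹.re := by
            rw [Complex.inv_re]
            exact div_pos hw (Complex.normSq_pos.2 hwne)
          exact mul_nonneg (hlam _ hedge) hinv.le
        · rw [if_neg hedge, zero_mul, zero_div]
          simp
      have hsum := Finset.sum_nonneg h3
      linarith
    refine ⟨?_, hrat⟩
    rcases Finset.eq_empty_or_nonempty S with rfl | ⟨v, hv⟩
    · rw [P_empty]; exact one_ne_zero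
    · intro h0
      have h := hrat v hv
      rw [h0, zero_div] at h
      simp at h

end Stmt18

theorem stmt18 {V : Type} [Fintype V] [DecidableEq V]
    (G : SimpleGraph V) (lam : Sym2 V → ℝ) (hlam : ∀ e ∈ G.edgeSet, 0 ≤ lam e)
    (x : V → ℂ) (hx : ∀ v, 0 < (x v).re) :
    (∑ M ∈ Finset.univ.filter (fun M : Finset (Sym2 V) =>
        (↑M : Set (Sym2 V)) ⊆ G.edgeSet ∧
        (↑M : Set (Sym2 V)).Pairwise fun e f => ∀ v, ¬(v ∈ e ∧ v ∈ f)),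
      ∏ e ∈ M,
        (lam e : ℂ) * Sym2.lift ⟨fun i j => x i * x j, fun _ _ => mul_comm _ _⟩ e) ≠ 0 := by
  have hkey := (Stmt18.key G lam hlam x hx Finset.univ.card Finset.univ le_rfl).1
  have hfilter : (Finset.univ.filter (fun M : Finset (Sym2 V) =>
        (↑M : Set (Sym2 V)) ⊆ G.edgeSet ∧
        (↑M : Set (Sym2 V)).Pairwise fun e f => ∀ v, ¬(v ∈ e ∧ v ∈ f))) =
      Finset.univ.filter (Stmt18.pred G Finset.univ) := by
    apply Finset.filter_congr
    intro M _
    simp [Stmt18.pred]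
  rw [hfilter]
  exact hkey
end
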